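/- arXiv:math/0404462 — 13 statements merged into one kernel-verified Lean document; each statement's English description precedes it below -/
import Mathlib

section
/- Let n, r be natural numbers, H : ℝ^{2n} × ℝ^r → ℝ a C² function, and R : ℝ^r → Matrix (Fin r) (Fin r) ℝ a C¹ map whose values are antisymmetric matrices and with R(0) = 0. Let J be the 2n×2n block matrix [[0, Iₙ],[−Iₙ, 0]]. Define the vector field X : ℝ^{2n} × ℝ^r → ℝ^{2n} × ℝ^r by X(x,z) = (J · ∇ₓH(x,z), R(z) · ∇_zH(x,z)), where ∇ₓH and ∇_zH denote the vectors of partial derivatives of H with respect to the first 2n and last r coordinates. Assume ∇ₓH(0,0) = 0 (so X(0,0) = 0, i.e. the origin is an equilibrium). Then the Fréchet derivative of X at (0,0) is the linear map (u,w) ↦ (S·u + Q·w, P·w), where S = J · (∂²H/∂x∂x)(0,0), Q = J · (∂²H/∂x∂z)(0,0), and P is the r×r matrix with entries P_{k,l} = Σ_{p=1}^{r} (∂R_{k,p}/∂z_l)(0) · (∂H/∂z_p)(0,0). -/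
open Matrix ContinuousLinearMap

/-!
The first component of `X` is the constant matrix `J` applied to `∇ₓH`, so its derivative is
`J` applied to the derivative of `∇ₓH`, i.e. to the `x`-rows of the Hessian of `H`. The second
component is `R(z) ∇_zH`; by the product rule its derivative at the origin is
`(u, w) ↦ (DR(0) w) ∇_zH(0,0) + R(0) D(∇_zH)(0,0) (u, w)`, and the second term vanishes since
`R(0) = 0`. Reading off the matrix entries of these linear maps on the standard basis gives
`S`, `Q` and `P`.
-/

section Coordinates

variable {𝕜 κ F : Type*} [Semiring 𝕜] [TopologicalSpace 𝕜] [Fintype κ] [DecidableEq κ]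
  [AddCommMonoid F] [Module 𝕜 F] [TopologicalSpace F]

theorem ContinuousLinearMap.apply_eq_sum_single (T : (κ → 𝕜) →L[𝕜] F) (w : κ → 𝕜) :
    T w = ∑ l, w l • T (Pi.single l 1) := by
  conv_lhs => rw [← Finset.univ_sum_single w]
  refine (map_sum T _ _).trans (Finset.sum_congr rfl fun l _ => ?_)
  rw [← map_smul, ← Pi.single_smul', smul_eq_mul, mul_one]

theorem ContinuousLinearMap.apply_prod_eq_sum_single {ι : Type*} [Fintype ι] [DecidableEq ι]
    [ContinuousAdd F] (T : ((ι → 𝕜) × (κ → 𝕜)) →L[𝕜] F) (u : ι → 𝕜) (w : κ → 𝕜) :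
    T (u, w) = ∑ j, u j • T (Pi.single j 1, 0) + ∑ l, w l • T (0, Pi.single l 1) := by
  rw [← T.comp_inl_add_comp_inr, (T.comp (inl 𝕜 _ _)).apply_eq_sum_single,
    (T.comp (inr 𝕜 _ _)).apply_eq_sum_single]
  rfl

end Coordinates

section MulVec

variable {E ι κ : Type*} [NormedAddCommGroup E] [NormedSpace ℝ E] [Fintype κ]

theorem HasFDerivAt.matrix_mulVec {M : E → Matrix ι κ ℝ} {v : E → κ → ℝ}
    {M' : ι → κ → E →L[ℝ] ℝ} {v' : κ → E →L[ℝ] ℝ} {x : E}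
    (hM : ∀ i q, HasFDerivAt (fun p => M p i q) (M' i q) x)
    (hv : ∀ q, HasFDerivAt (fun p => v p q) (v' q) x) :
    HasFDerivAt (fun p => M p *ᵥ v p)
      (ContinuousLinearMap.pi fun i => ∑ q, (M x i q • v' q + v x q • M' i q)) x :=
  hasFDerivAt_pi.2 fun i => HasFDerivAt.fun_sum fun q _ => (hM i q).mul (hv q)

theorem hasFDerivAt_const_mulVec (A : Matrix ι κ ℝ) {v : E → κ → ℝ} {x : E}
    (hv : ∀ q, DifferentiableAt ℝ (fun p => v p q) x) :
    HasFDerivAt (fun p => A *ᵥ v p)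
      (ContinuousLinearMap.pi fun i => ∑ q, A i q • fderiv ℝ (fun p => v p q) x) x :=
  (HasFDerivAt.matrix_mulVec (fun i q => hasFDerivAt_const (A i q) x)
    fun q => (hv q).hasFDerivAt).congr_fderiv (by simp)

theorem hasFDerivAt_mulVec_comp_snd_of_eq_zero {F : Type*} [NormedAddCommGroup F]
    [NormedSpace ℝ F] {M : F → Matrix ι κ ℝ} {v : E × F → κ → ℝ} {x : E} {z : F}
    (hM : ∀ i q, DifferentiableAt ℝ (fun z => M z i q) z) (hMz : M z = 0)
    (hv : ∀ q, DifferentiableAt ℝ (fun p => v p q) (x, z)) :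
    HasFDerivAt (fun p => M p.2 *ᵥ v p)
      ((ContinuousLinearMap.pi fun i => ∑ q, v (x, z) q • fderiv ℝ (fun z => M z i q) z).comp
        (snd ℝ E F)) (x, z) := by
  have hMsnd : ∀ i q, HasFDerivAt (fun p : E × F => M p.2 i q)
      ((fderiv ℝ (fun z => M z i q) z).comp (snd ℝ E F)) (x, z) := fun i q =>
    (hM i q).hasFDerivAt.comp (f := Prod.snd) (x, z) hasFDerivAt_snd
  refine (HasFDerivAt.matrix_mulVec hMsnd fun q => (hv q).hasFDerivAt).congr_fderiv ?_
  refine ContinuousLinearMap.ext fun p => funext fun i => ?_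
  simp [hMz]

end MulVec

theorem ContDiff.differentiableAt_fderiv_apply {E F : Type*} [NormedAddCommGroup E]
    [NormedSpace ℝ E] [NormedAddCommGroup F] [NormedSpace ℝ F] {H : E → F}
    (hH : ContDiff ℝ 2 H) (x v : E) : DifferentiableAt ℝ (fun p => fderiv ℝ H p v) x := by
  have := (hH.fderiv_right le_rfl).differentiable one_ne_zero x
  fun_prop

theorem stmt_0_general (n r : ℕ)
    (H : (((Fin n ⊕ Fin n) → ℝ) × (Fin r → ℝ)) → ℝ)
    (hH : ContDiff ℝ 2 H)
    (R : (Fin r → ℝ) → Fin r → Fin r → ℝ)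
    (hR : ContDiff ℝ 1 R)
    (hR0 : R 0 = 0)
    (J : (Fin n ⊕ Fin n) → (Fin n ⊕ Fin n) → ℝ)
    (gradx : (((Fin n ⊕ Fin n) → ℝ) × (Fin r → ℝ)) → ((Fin n ⊕ Fin n) → ℝ))
    (hgradx : ∀ p i, gradx p i = fderiv ℝ H p (Pi.single i 1, 0))
    (gradz : (((Fin n ⊕ Fin n) → ℝ) × (Fin r → ℝ)) → (Fin r → ℝ))
    (hgradz : ∀ p k, gradz p k = fderiv ℝ H p (0, Pi.single k 1))
    (X : (((Fin n ⊕ Fin n) → ℝ) × (Fin r → ℝ)) →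
      (((Fin n ⊕ Fin n) → ℝ) × (Fin r → ℝ)))
    (hX : ∀ p, X p =
      (fun i => ∑ q, J i q * gradx p q, fun k => ∑ q, R p.2 k q * gradz p q))
    (S : (Fin n ⊕ Fin n) → (Fin n ⊕ Fin n) → ℝ)
    (hS : ∀ i j, S i j =
      ∑ p, J i p * fderiv ℝ (fun q => gradx q p) (0, 0) (Pi.single j 1, 0))
    (Q : (Fin n ⊕ Fin n) → Fin r → ℝ)
    (hQ : ∀ i l, Q i l =
      ∑ p, J i p * fderiv ℝ (fun q => gradx q p) (0, 0) (0, Pi.single l 1))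
    (P : Fin r → Fin r → ℝ)
    (hP : ∀ k l, P k l =
      ∑ p, fderiv ℝ (fun z => R z k p) 0 (Pi.single l 1) * gradz (0, 0) p) :
    ∃ L : (((Fin n ⊕ Fin n) → ℝ) × (Fin r → ℝ)) →L[ℝ]
        (((Fin n ⊕ Fin n) → ℝ) × (Fin r → ℝ)),
      HasFDerivAt X L (0, 0) ∧
      ∀ (u : (Fin n ⊕ Fin n) → ℝ) (w : Fin r → ℝ),
        L (u, w) = (fun i => (∑ q, S i q * u q) + ∑ l, Q i l * w l,
          fun k => ∑ l, P k l * w l) := by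
  have hgradx_diff : ∀ q, DifferentiableAt ℝ (fun p => gradx p q) (0, 0) := fun q => by
    simpa only [← hgradx] using hH.differentiableAt_fderiv_apply (0, 0) (Pi.single q 1, 0)
  have hgradz_diff : ∀ q, DifferentiableAt ℝ (fun p => gradz p q) (0, 0) := fun q => by
    simpa only [← hgradz] using hH.differentiableAt_fderiv_apply (0, 0) (0, Pi.single q 1)
  have hR_diff : ∀ k q, DifferentiableAt ℝ (fun z => R z k q) 0 := by
    have := hR.differentiable one_ne_zero
    fun_prop
  have hXx := hasFDerivAt_const_mulVec J hgradx_diff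
  have hXz := hasFDerivAt_mulVec_comp_snd_of_eq_zero hR_diff hR0 hgradz_diff
  refine ⟨_, funext hX ▸ hXx.prodMk hXz, fun u w => ?_⟩
  ext i
  · show (∑ q, J i q • fderiv ℝ (fun p => gradx p q) (0, 0)) (u, w) = _
    rw [apply_prod_eq_sum_single]
    simp [hS, hQ, mul_comm]
  · show (∑ q, gradz (0, 0) q • fderiv ℝ (fun z => R z i q) 0) w = _
    rw [apply_eq_sum_single]
    simp [hP, mul_comm]

/-- Linearization in Darboux–Weinstein coordinates: for the vector field
`X(x,z) = (J ∇ₓH(x,z), R(z) ∇_zH(x,z))` on `ℝ^{2n} × ℝ^r` (with `J` the canonical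
symplectic matrix, `R` a `C¹` family of antisymmetric matrices with `R(0) = 0`, `H` of
class `C²`, and `∇ₓH(0,0) = 0`), the Fréchet derivative of `X` at the origin is the linear
map `(u,w) ↦ (S·u + Q·w, P·w)` with `S = J·Hₓₓ(0,0)`, `Q = J·Hₓ_z(0,0)` and
`P_{kl} = Σ_p (∂R_{kp}/∂z_l)(0) (∂H/∂z_p)(0,0)`.  (`ℝ^{2n}` is realized as
`(Fin n ⊕ Fin n) → ℝ` so that `J` can be written in block form.) -/
theorem stmt_0 (n r : ℕ)
    (H : (((Fin n ⊕ Fin n) → ℝ) × (Fin r → ℝ)) → ℝ)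
    (hH : ContDiff ℝ 2 H)
    (R : (Fin r → ℝ) → Fin r → Fin r → ℝ)
    (hR : ContDiff ℝ 1 R)
    (hRanti : ∀ z k l, R z k l = -R z l k)
    (hR0 : R 0 = 0)
    (J : (Fin n ⊕ Fin n) → (Fin n ⊕ Fin n) → ℝ)
    (hJ : ∀ i q, J i q =
      Matrix.fromBlocks (0 : Matrix (Fin n) (Fin n) ℝ) (1 : Matrix (Fin n) (Fin n) ℝ)
        (-1 : Matrix (Fin n) (Fin n) ℝ) (0 : Matrix (Fin n) (Fin n) ℝ) i q)
    (gradx : (((Fin n ⊕ Fin n) → ℝ) × (Fin r → ℝ)) → ((Fin n ⊕ Fin n) → ℝ))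
    (hgradx : ∀ p i, gradx p i = fderiv ℝ H p (Pi.single i 1, 0))
    (gradz : (((Fin n ⊕ Fin n) → ℝ) × (Fin r → ℝ)) → (Fin r → ℝ))
    (hgradz : ∀ p k, gradz p k = fderiv ℝ H p (0, Pi.single k 1))
    (X : (((Fin n ⊕ Fin n) → ℝ) × (Fin r → ℝ)) →
      (((Fin n ⊕ Fin n) → ℝ) × (Fin r → ℝ)))
    (hX : ∀ p, X p =
      (fun i => ∑ q, J i q * gradx p q, fun k => ∑ q, R p.2 k q * gradz p q))
    (heq : gradx (0, 0) = 0)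
    (S : (Fin n ⊕ Fin n) → (Fin n ⊕ Fin n) → ℝ)
    (hS : ∀ i j, S i j =
      ∑ p, J i p * fderiv ℝ (fun q => gradx q p) (0, 0) (Pi.single j 1, 0))
    (Q : (Fin n ⊕ Fin n) → Fin r → ℝ)
    (hQ : ∀ i l, Q i l =
      ∑ p, J i p * fderiv ℝ (fun q => gradx q p) (0, 0) (0, Pi.single l 1))
    (P : Fin r → Fin r → ℝ)
    (hP : ∀ k l, P k l =
      ∑ p, fderiv ℝ (fun z => R z k p) 0 (Pi.single l 1) * gradz (0, 0) p) :
    ∃ L : (((Fin n ⊕ Fin n) → ℝ) × (Fin r → ℝ)) →L[ℝ]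
        (((Fin n ⊕ Fin n) → ℝ) × (Fin r → ℝ)),
      HasFDerivAt X L (0, 0) ∧
      ∀ (u : (Fin n ⊕ Fin n) → ℝ) (w : Fin r → ℝ),
        L (u, w) = (fun i => (∑ q, S i q * u q) + ∑ l, Q i l * w l,
          fun k => ∑ l, P k l * w l) :=
  stmt_0_general n r H hH R hR hR0 J gradx hgradx gradz hgradz X hX S hS Q hQ P hP
end

section
/- Let S be a 2n×2n complex matrix, P an r×r complex matrix, Q a 2n×r complex matrix, and L the block upper triangular matrix [[S, Q],[0, P]]. Suppose there exist μ ∈ ℂ and a nonzero vector v ∈ ℂ^r such that P·v = μ·v and Q·v does not lie in the range of S − μI (a 'coupled passing'). Then L is not diagonalizable, i.e. ℂ^{2n+r} does not admit a basis of eigenvectors of L (L has a nondiagonal block in its Jordan canonical form). -/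
/-!
If `L = [[S, Q], [0, P]]` has an eigenbasis, then `ℂ^{2n+r}` is the sum of the eigenspaces of `L`.
Projection onto the bottom block intertwines `L` with `P` and is onto, so it maps the eigenspaces
of `L` onto eigenspaces of `P`; since the eigenspaces of `P` are independent, the `μ`-eigenspace
of `L` is mapped onto the `μ`-eigenspace of `P`. Thus `v` lifts to an eigenvector `(x, v)` of `L`
with eigenvalue `μ`, and its top block reads `(S - μ) (-x) = Q v`.
-/

open Matrix

namespace Module.End

variable {R V W : Type*} [CommRing R] [AddCommGroup V] [Module R V] [AddCommGroup W] [Module R W]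
  {f : End R V} {g : End R W} {π : V →ₗ[R] W}

lemma iSup_eigenspace_eq_top_of_basis {ι : Type*} (b : Basis ι R V) (c : ι → R)
    (hb : ∀ i, f (b i) = c i • b i) : ⨆ μ, f.eigenspace μ = ⊤ := by
  refine eq_top_iff.mpr (b.span_eq ▸ Submodule.span_le.mpr ?_)
  rintro _ ⟨i, rfl⟩
  exact Submodule.mem_iSup_of_mem (c i) (mem_eigenspace_iff.mpr (hb i))

lemma map_eigenspace_le_of_comp_eq (hπ : π ∘ₗ f = g ∘ₗ π) (μ : R) :
    (f.eigenspace μ).map π ≤ g.eigenspace μ := by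
  rintro _ ⟨x, hx, rfl⟩
  rw [SetLike.mem_coe, mem_eigenspace_iff] at hx
  rw [mem_eigenspace_iff, ← LinearMap.comp_apply, ← hπ, LinearMap.comp_apply, hx, map_smul]

lemma map_eigenspace_eq_of_comp_eq [IsDomain R] [IsTorsionFree R W] (hπ : π ∘ₗ f = g ∘ₗ π)
    (hπ_surj : Function.Surjective π) (hf : ⨆ μ, f.eigenspace μ = ⊤) (μ : R) :
    (f.eigenspace μ).map π = g.eigenspace μ := by
  refine le_antisymm (map_eigenspace_le_of_comp_eq hπ μ) fun w hw => ?_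
  have hw_sup : w ∈ (f.eigenspace μ).map π ⊔ ⨆ (ν) (_ : ν ≠ μ), (f.eigenspace ν).map π := by
    rw [← iSup_split_single (fun ν => (f.eigenspace ν).map π), ← Submodule.map_iSup, hf,
      Submodule.map_top, LinearMap.range_eq_top.mpr hπ_surj]
    trivial
  obtain ⟨a, ha, b, hb, rfl⟩ := Submodule.mem_sup.mp hw_sup
  have hb_mu : b ∈ g.eigenspace μ := by
    simpa using sub_mem hw (map_eigenspace_le_of_comp_eq hπ μ ha)
  have hb_other : b ∈ ⨆ (ν) (_ : ν ≠ μ), g.eigenspace ν :=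
    iSup₂_mono (fun ν _ => map_eigenspace_le_of_comp_eq hπ ν) hb
  have hb_zero : b = 0 :=
    Submodule.disjoint_def.mp ((eigenspaces_iSupIndep g).disjoint_biSup (y := {ν | ν ≠ μ})
      (by simp)) b hb_mu hb_other
  simpa [hb_zero] using ha

end Module.End

lemma Matrix.exists_mulVec_sub_smul_eq_of_fromBlocks {K m r ι : Type*} [CommRing K] [IsDomain K]
    [Fintype m] [Fintype r] (S : Matrix m m K) (Q : Matrix m r K) (P : Matrix r r K)
    (b : Module.Basis ι K (m ⊕ r → K)) (c : ι → K)
    (hb : ∀ i, fromBlocks S Q 0 P *ᵥ b i = c i • b i) {μ : K} {v : r → K}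
    (hv : P *ᵥ v = μ • v) : ∃ w, S *ᵥ w - μ • w = Q *ᵥ v := by
  have hπ : LinearMap.funLeft K K Sum.inr ∘ₗ (fromBlocks S Q 0 P).mulVecLin =
      P.mulVecLin ∘ₗ LinearMap.funLeft K K Sum.inr := by
    ext x j
    simp [fromBlocks_mulVec, LinearMap.funLeft, Function.comp_def]
  have hv_mem : v ∈ Module.End.eigenspace P.mulVecLin μ := Module.End.mem_eigenspace_iff.mpr hv
  rw [← Module.End.map_eigenspace_eq_of_comp_eq hπ
      (LinearMap.funLeft_surjective_of_injective K K _ Sum.inr_injective)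
      (Module.End.iSup_eigenspace_eq_top_of_basis b c hb)] at hv_mem
  obtain ⟨x, hx, rfl⟩ := hv_mem
  rw [SetLike.mem_coe, Module.End.mem_eigenspace_iff] at hx
  refine ⟨-(x ∘ Sum.inl), funext fun i => ?_⟩
  change _ = (Q *ᵥ (x ∘ Sum.inr)) i
  have top := congrFun hx (Sum.inl i)
  simp only [mulVecLin_apply, fromBlocks_mulVec, Sum.elim_inl, Pi.add_apply, Pi.smul_apply,
    smul_eq_mul] at top
  simp only [Pi.sub_apply, Pi.smul_apply, mulVec_neg, Pi.neg_apply, smul_eq_mul,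
    Function.comp_apply]
  linear_combination -top

theorem stmt_2_general (n r : ℕ)
    (S : Matrix (Fin (2 * n)) (Fin (2 * n)) ℂ) (P : Matrix (Fin r) (Fin r) ℂ)
    (Q : Matrix (Fin (2 * n)) (Fin r) ℂ)
    (L : Matrix (Fin (2 * n) ⊕ Fin r) (Fin (2 * n) ⊕ Fin r) ℂ)
    (hL : L = Matrix.fromBlocks S Q 0 P)
    (mu : ℂ) (v : Fin r → ℂ) (hPv : P.mulVec v = mu • v)
    (hQv : ¬∃ w : Fin (2 * n) → ℂ, S.mulVec w - mu • w = Q.mulVec v) :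
    ¬∃ (b : Module.Basis (Fin (2 * n) ⊕ Fin r) ℂ ((Fin (2 * n) ⊕ Fin r) → ℂ))
        (c : (Fin (2 * n) ⊕ Fin r) → ℂ),
        ∀ s, L.mulVec (b s) = c s • b s := by
  rintro ⟨b, c, hb⟩
  subst hL
  exact hQv (exists_mulVec_sub_smul_eq_of_fromBlocks S Q P b c hb hPv)

/-- A coupled passing forces a nontrivial Jordan block: if `v ≠ 0` is an eigenvector of `P`
with eigenvalue `μ` and `Q·v` is not in the range of `S − μI`, then the block upper
triangular matrix `L = [[S, Q], [0, P]]` is not diagonalizable, i.e. there is no basis of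
`ℂ^{2n+r}` consisting of eigenvectors of `L`. -/
theorem stmt_2 (n r : ℕ)
    (S : Matrix (Fin (2 * n)) (Fin (2 * n)) ℂ) (P : Matrix (Fin r) (Fin r) ℂ)
    (Q : Matrix (Fin (2 * n)) (Fin r) ℂ)
    (L : Matrix (Fin (2 * n) ⊕ Fin r) (Fin (2 * n) ⊕ Fin r) ℂ)
    (hL : L = Matrix.fromBlocks S Q 0 P)
    (mu : ℂ) (v : Fin r → ℂ) (hv : v ≠ 0) (hPv : P.mulVec v = mu • v)
    (hQv : ¬∃ w : Fin (2 * n) → ℂ, S.mulVec w - mu • w = Q.mulVec v) :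
    ¬∃ (b : Module.Basis (Fin (2 * n) ⊕ Fin r) ℂ ((Fin (2 * n) ⊕ Fin r) → ℂ))
        (c : (Fin (2 * n) ⊕ Fin r) → ℂ),
        ∀ s, L.mulVec (b s) = c s • b s :=
  stmt_2_general n r S P Q L hL mu v hPv hQv
end

section
/- Let X : ℝ^m → ℝ^m be a smooth vector field admitting a global flow φ : ℝ × ℝ^m → ℝ^m (φ(0,·) = id, φ(t+s,·) = φ(t, φ(s,·)), and for each z the curve t ↦ φ(t,z) is differentiable with derivative X(φ(t,z))). Let z_e be an equilibrium: X(z_e) = 0. Let H, C₁, …, C_k : ℝ^m → ℝ be smooth functions conserved along X, i.e. dH(z)(X(z)) = 0 and dC_i(z)(X(z)) = 0 for all z. Let F : ℝ^m → ℝ be a smooth function satisfying at least one of: (i) d((F − F(z_e))²)(z)(X(z)) ≤ 0 for all z ≠ z_e, and dF(y)(X(y)) ≤ 0 for all y ≠ z_e at which d((F − F(z_e))²)(y)(X(y)) = 0; or (ii) d((F − F(z_e))²)(z)(X(z)) ≤ 0 for all z ≠ z_e, and F(z) − F(z_e) > 0 for all z ≠ z_e in some neighborhood of z_e. Assume there exist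 constants λ₀, λ₁, …, λ_k, μ such that the function G := λ₀H + λ₁C₁ + … + λ_kC_k + μF has a critical point at z_e (dG(z_e) = 0) and its Hessian (second Fréchet derivative) at z_e is positive definite when restricted to the subspace W := ker dH(z_e) ∩ ker dC₁(z_e) ∩ … ∩ ker dC_k(z_e). Then z_e is weakly asymptotically stable: for every neighborhood U of z_e there is an open neighborhood V ⊆ U of z_e such that φ(t, V) ⊆ φ(s, V) whenever t ≥ s; in particular, z_e is Lyapunov stable (for every neighborhood U there is a neighborhood V with φ(t, z) ∈ U for all z ∈ V and t ≥ 0). -/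
set_option maxHeartbeats 1000000

open Set Metric

section Aux

variable {E : Type*} [NormedAddCommGroup E] [NormedSpace ℝ E] [ProperSpace E]

/-- Second derivative test: strict local minimum. -/
lemma second_deriv_test' (f : E → ℝ) (hf : ContDiff ℝ (⊤ : ℕ∞) f) (ze : E)
    (hcrit : fderiv ℝ f ze = 0)
    (hpos : ∀ v : E, v ≠ 0 → 0 < fderiv ℝ (fderiv ℝ f) ze v v) :
    ∃ r > 0, ∀ z ∈ Metric.ball ze r, z ≠ ze → f ze < f z := by
  by_cases hdeg : ∀ v : E, v = 0
  · exact ⟨1, one_pos, fun z _ hz => absurd (by rw [← sub_eq_zero]; exact hdeg _) hz⟩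
  push_neg at hdeg
  obtain ⟨v₀, hv₀⟩ := hdeg
  haveI : Nontrivial E := nontrivial_of_ne v₀ 0 hv₀
  set Q : E → (E →L[ℝ] E →L[ℝ] ℝ) := fderiv ℝ (fderiv ℝ f) with hQ
  have hf1 : ContDiff ℝ (⊤ : ℕ∞) (fderiv ℝ f) := hf.fderiv_right (by simp)
  have hQcont : Continuous Q := hf1.continuous_fderiv (by simp)
  have hfd : Differentiable ℝ f := hf.differentiable (by simp)
  have hf1d : Differentiable ℝ (fderiv ℝ f) := hf1.differentiable (by simp)
  -- min of Q ze v v on the unit sphere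
  have hScomp : IsCompact (sphere (0:E) 1) := isCompact_sphere 0 1
  have hSne : (sphere (0:E) 1).Nonempty := NormedSpace.sphere_nonempty.2 zero_le_one
  have hqcont : Continuous fun v => Q ze v v :=
    ((Q ze).continuous).clm_apply continuous_id
  obtain ⟨u₀, hu₀S, hu₀min⟩ := hScomp.exists_isMinOn hSne hqcont.continuousOn
  set α := Q ze u₀ u₀ with hα
  have hu₀ne : u₀ ≠ 0 := by
    intro h
    rw [h, mem_sphere_iff_norm] at hu₀S
    simp at hu₀S
  have hαpos : 0 < α := hpos u₀ hu₀ne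
  -- scaling: ∀ w ≠ 0, α * ‖w‖^2 ≤ Q ze w w
  have hscale : ∀ w : E, w ≠ 0 → α * ‖w‖ ^ 2 ≤ Q ze w w := by
    intro w hw
    have hnw : ‖w‖ ≠ 0 := norm_ne_zero_iff.2 hw
    set u := ‖w‖⁻¹ • w with hu
    have huS : u ∈ sphere (0:E) 1 := by
      simp [hu, norm_smul, abs_of_nonneg (inv_nonneg.2 (norm_nonneg w)),
        inv_mul_cancel₀ hnw]
    have hwu : w = ‖w‖ • u := by rw [hu, smul_inv_smul₀ hnw]
    have : Q ze w w = ‖w‖ ^ 2 * Q ze u u := by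
      conv_lhs => rw [hwu]
      simp [map_smul, smul_eq_mul]
      ring
    rw [this]
    have := isMinOn_iff.mp hu₀min u huS
    nlinarith [sq_nonneg ‖w‖, norm_nonneg w]
  -- continuity: find r with ‖Q η - Q ze‖ < α/2 on ball
  have hcont : ∀ᶠ η in nhds ze, dist (Q η) (Q ze) < α / 2 :=
    Metric.tendsto_nhds.mp (hQcont.tendsto ze) _ (by positivity)
  obtain ⟨r, hr, hball⟩ := Metric.eventually_nhds_iff_ball.mp hcont
  refine ⟨r, hr, fun z hz hzne => ?_⟩
  set w := z - ze with hw
  have hwne : w ≠ 0 := sub_ne_zero.2 hzne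
  have hwr : ‖w‖ < r := by
    have := mem_ball_iff_norm.mp hz
    rwa [hw]
  -- lower bound on Q η w w for η in ball
  have hQlower : ∀ η ∈ Metric.ball ze r, α / 2 * ‖w‖ ^ 2 ≤ Q η w w := by
    intro η hη
    have h1 : ‖(Q η - Q ze) w w‖ ≤ ‖Q η - Q ze‖ * ‖w‖ * ‖w‖ := by
      calc ‖(Q η - Q ze) w w‖ ≤ ‖(Q η - Q ze) w‖ * ‖w‖ :=
            ((Q η - Q ze) w).le_opNorm w
        _ ≤ ‖Q η - Q ze‖ * ‖w‖ * ‖w‖ :=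
            mul_le_mul_of_nonneg_right ((Q η - Q ze).le_opNorm w) (norm_nonneg w)
    have h2 : ‖Q η - Q ze‖ < α / 2 := by
      have := hball η hη; exact lt_of_eq_of_lt (dist_eq_norm (Q η) (Q ze)).symm this
    have h3 : Q η w w = Q ze w w + (Q η - Q ze) w w := by
      simp [ContinuousLinearMap.sub_apply]
    have h4 := hscale w hwne
    have h5 : |(Q η - Q ze) w w| ≤ ‖Q η - Q ze‖ * ‖w‖ * ‖w‖ := h1
    have h6 : 0 ≤ ‖w‖ := norm_nonneg w
    nlinarith [abs_le.mp h5]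
  -- MVT along the segment
  set g : ℝ → ℝ := fun t => f (ze + t • w) with hg
  set g' : ℝ → ℝ := fun t => fderiv ℝ f (ze + t • w) w with hg'
  have hline : ∀ t : ℝ, HasDerivAt (fun s : ℝ => ze + s • w) w t := by
    intro t
    simpa using ((hasDerivAt_id t).smul_const w).const_add ze
  have hgd : ∀ t : ℝ, HasDerivAt g (g' t) t := by
    intro t
    exact (hfd (ze + t • w)).hasFDerivAt.comp_hasDerivAt t (hline t)
  have hg'd : ∀ t : ℝ, HasDerivAt g' (Q (ze + t • w) w w) t := by
    intro t
    have h1 : HasDerivAt (fun s : ℝ => fderiv ℝ f (ze + s • w)) (Q (ze + t • w) w) t :=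
      (hf1d (ze + t • w)).hasFDerivAt.comp_hasDerivAt t (hline t)
    have := h1.clm_apply (hasDerivAt_const t w)
    simpa using this
  obtain ⟨θ, hθ, hθslope⟩ := exists_hasDerivAt_eq_slope g g' one_pos
    (fun t _ => (hgd t).continuousAt.continuousWithinAt) (fun t _ => hgd t)
  obtain ⟨η, hη, hηslope⟩ := exists_hasDerivAt_eq_slope g' (fun t => Q (ze + t • w) w w)
    hθ.1 (fun t _ => (hg'd t).continuousAt.continuousWithinAt) (fun t _ => hg'd t)
  have hg0 : g 0 = f ze := by simp [hg]
  have hg1 : g 1 = f z := by simp [hg, hw]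
  have hg'0 : g' 0 = 0 := by simp [hg', hcrit]
  have hηball : ze + η • w ∈ Metric.ball ze r := by
    have hη1 : 0 < η := hη.1
    have hη2 : η < 1 := lt_trans hη.2 hθ.2
    rw [mem_ball_iff_norm]
    have : (ze + η • w) - ze = η • w := by abel
    rw [this, norm_smul, Real.norm_eq_abs, abs_of_pos hη1]
    calc η * ‖w‖ ≤ 1 * ‖w‖ := by
          apply mul_le_mul_of_nonneg_right (le_of_lt hη2) (norm_nonneg w)
      _ = ‖w‖ := one_mul _
      _ < r := hwr
  have hθne : θ ≠ 0 := ne_of_gt hθ.1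
  have e1 : g' θ = f z - f ze := by
    rw [hθslope, hg1, hg0]; ring
  have e2 : g' θ = θ * (Q (ze + η • w) w w) := by
    rw [hηslope, hg'0]
    field_simp
    ring
  have hkey : f z - f ze = θ * (Q (ze + η • w) w w) := by rw [← e1, e2]
  have hQη := hQlower _ hηball
  have hwpos : 0 < ‖w‖ ^ 2 := pow_pos (norm_pos_iff.2 hwne) 2
  have h7 : 0 < α / 2 * ‖w‖ ^ 2 := mul_pos (by linarith) hwpos
  have h8 : 0 < θ * (Q (ze + η • w) w w) := mul_pos hθ.1 (lt_of_lt_of_le h7 hQη)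
  linarith

/-- If q is positive on nonzero vectors where h vanishes, then q + c*h is positive
definite for some c > 0, assuming both are continuous and 2-homogeneous and h ≥ 0. -/
lemma posdef_shift' (q h : E → ℝ) (hq : Continuous q) (hh : Continuous h)
    (hq2 : ∀ (a : ℝ) (v : E), q (a • v) = a ^ 2 * q v)
    (hh2 : ∀ (a : ℝ) (v : E), h (a • v) = a ^ 2 * h v)
    (hh0 : ∀ v, 0 ≤ h v)
    (hpos : ∀ v : E, v ≠ 0 → h v = 0 → 0 < q v) :
    ∃ c > (0 : ℝ), ∀ v : E, v ≠ 0 → 0 < q v + c * h v := by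
  -- reduce to the unit sphere
  suffices hS : ∃ c > (0 : ℝ), ∀ v ∈ sphere (0 : E) 1, 0 < q v + c * h v by
    obtain ⟨c, hc, hcS⟩ := hS
    refine ⟨c, hc, fun v hv => ?_⟩
    have hnv : ‖v‖ ≠ 0 := norm_ne_zero_iff.2 hv
    set u := ‖v‖⁻¹ • v with hu
    have huS : u ∈ sphere (0 : E) 1 := by
      simp [hu, norm_smul, abs_of_nonneg (inv_nonneg.2 (norm_nonneg v)),
        inv_mul_cancel₀ hnv]
    have hvu : v = ‖v‖ • u := by rw [hu, smul_inv_smul₀ hnv]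
    have hqv : q v = ‖v‖ ^ 2 * q u := by conv_lhs => rw [hvu, hq2]
    have hhv : h v = ‖v‖ ^ 2 * h u := by conv_lhs => rw [hvu, hh2]
    have hn2 : 0 < ‖v‖ ^ 2 := pow_pos (norm_pos_iff.2 hv) 2
    have := hcS u huS
    rw [hqv, hhv]
    nlinarith
  set S₀ : Set E := sphere (0 : E) 1 ∩ q ⁻¹' (Iic 0) with hS₀
  have hS₀comp : IsCompact S₀ :=
    (isCompact_sphere 0 1).inter_right (isClosed_Iic.preimage hq)
  rcases S₀.eq_empty_or_nonempty with hemp | hne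
  · refine ⟨1, one_pos, fun v hvS => ?_⟩
    have hvq : 0 < q v := by
      by_contra hcon
      push_neg at hcon
      exact absurd (hS₀ ▸ (Set.mem_inter hvS hcon) : v ∈ S₀) (by rw [hemp]; simp)
    have := hh0 v
    linarith
  · obtain ⟨v₁, hv₁S, hv₁min⟩ := hS₀comp.exists_isMinOn hne hh.continuousOn
    obtain ⟨v₂, hv₂S, hv₂min⟩ := hS₀comp.exists_isMinOn hne hq.continuousOn
    have hv₁sphere : v₁ ∈ sphere (0 : E) 1 := hv₁S.1
    have hv₁ne : v₁ ≠ 0 := by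
      intro hcon; rw [hcon, mem_sphere_iff_norm] at hv₁sphere; simp at hv₁sphere
    have hβ : 0 < h v₁ := by
      rcases lt_or_eq_of_le (hh0 v₁) with hlt | heq
      · exact hlt
      · exact absurd hv₁S.2 (not_le.2 (hpos v₁ hv₁ne heq.symm))
    set β := h v₁
    set γ := q v₂
    refine ⟨(1 + |γ|) / β, by positivity, fun v hvS => ?_⟩
    by_cases hvq : q v ≤ 0
    · have hvS₀ : v ∈ S₀ := Set.mem_inter hvS hvq
      have h1 : β ≤ h v := isMinOn_iff.mp hv₁min v hvS₀
      have h2 : γ ≤ q v := isMinOn_iff.mp hv₂min v hvS₀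
      have h3 : (1 + |γ|) / β * β = 1 + |γ| := div_mul_cancel₀ _ (ne_of_gt hβ)
      have h4 : (1 + |γ|) / β * β ≤ (1 + |γ|) / β * h v :=
        mul_le_mul_of_nonneg_left h1 (by positivity)
      have h5 : -|γ| ≤ γ := neg_abs_le γ
      nlinarith
    · push_neg at hvq
      have h1 : (0:ℝ) ≤ (1 + |γ|) / β := by positivity
      nlinarith [mul_nonneg h1 (hh0 v)]

end Aux

/-- Energy-Casimir theorem with weakly asymptotically stable behavior: let `X` be a smooth
vector field on `ℝ^m` with global flow `φ` and equilibrium `ze`, let `H, C₁, …, C_k` be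
conserved quantities and `F` a function satisfying condition (i) or (ii) below. If some
combination `λ₀H + ΣλᵢCᵢ + μF` has a critical point at `ze` with Hessian positive definite
on `W = ker dH(ze) ∩ ⋂ᵢ ker dCᵢ(ze)`, then `ze` is weakly asymptotically stable (and in
particular Lyapunov stable). -/
theorem stmt_4 (m k : ℕ)
    (X : (Fin m → ℝ) → (Fin m → ℝ)) (hX : ContDiff ℝ (⊤ : ℕ∞) X)
    (φ : ℝ → (Fin m → ℝ) → (Fin m → ℝ))
    (hφ0 : ∀ z, φ 0 z = z)
    (hφadd : ∀ t s z, φ (t + s) z = φ t (φ s z))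
    (hφderiv : ∀ t z, HasDerivAt (fun τ => φ τ z) (X (φ t z)) t)
    (ze : Fin m → ℝ) (hze : X ze = 0)
    (H : (Fin m → ℝ) → ℝ) (C : Fin k → (Fin m → ℝ) → ℝ) (F : (Fin m → ℝ) → ℝ)
    (hH : ContDiff ℝ (⊤ : ℕ∞) H) (hC : ∀ i, ContDiff ℝ (⊤ : ℕ∞) (C i))
    (hF : ContDiff ℝ (⊤ : ℕ∞) F)
    (hHcons : ∀ z, fderiv ℝ H z (X z) = 0)
    (hCcons : ∀ i z, fderiv ℝ (C i) z (X z) = 0)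
    (hFcond :
      ((∀ z, z ≠ ze → fderiv ℝ (fun y => (F y - F ze) ^ 2) z (X z) ≤ 0) ∧
        (∀ y, y ≠ ze → fderiv ℝ (fun y' => (F y' - F ze) ^ 2) y (X y) = 0 →
          fderiv ℝ F y (X y) ≤ 0)) ∨
      ((∀ z, z ≠ ze → fderiv ℝ (fun y => (F y - F ze) ^ 2) z (X z) ≤ 0) ∧
        (∃ V ∈ nhds ze, ∀ z ∈ V, z ≠ ze → 0 < F z - F ze)))
    (lam₀ : ℝ) (lam : Fin k → ℝ) (mu : ℝ)
    (G : (Fin m → ℝ) → ℝ)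
    (hG : G = fun z => lam₀ * H z + (∑ i, lam i * C i z) + mu * F z)
    (hcrit : fderiv ℝ G ze = 0)
    (hpos : ∀ v : Fin m → ℝ, v ≠ 0 → fderiv ℝ H ze v = 0 →
      (∀ i, fderiv ℝ (C i) ze v = 0) → 0 < fderiv ℝ (fderiv ℝ G) ze v v) :
    ∀ U ∈ nhds ze, ∃ V : Set (Fin m → ℝ), IsOpen V ∧ ze ∈ V ∧ V ⊆ U ∧
      (∀ s t : ℝ, s ≤ t → φ t '' V ⊆ φ s '' V) ∧
      (∀ z ∈ V, ∀ t ≥ (0 : ℝ), φ t z ∈ U) := by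
  intro U hU
  classical
  -- degenerate case: the whole space is a single point
  by_cases hdeg : ∀ v : Fin m → ℝ, v = 0
  · have hall : ∀ z : Fin m → ℝ, z = ze := fun z => by
      have := hdeg (z - ze); rwa [sub_eq_zero] at this
    refine ⟨Set.univ, isOpen_univ, trivial, fun z _ => ?_, ?_, fun z _ t _ => ?_⟩
    · rw [hall z]; exact mem_of_mem_nhds hU
    · rintro s t _ y ⟨z, -, rfl⟩
      exact ⟨ze, trivial, by rw [hall (φ s ze), hall (φ t z)]⟩
    · rw [hall (φ t z)]; exact mem_of_mem_nhds hU
  push_neg at hdeg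
  obtain ⟨v₀, hv₀⟩ := hdeg
  haveI : Nontrivial (Fin m → ℝ) := nontrivial_of_ne v₀ 0 hv₀
  -- basic differentiability facts
  have hHd : Differentiable ℝ H := hH.differentiable (by simp)
  have hCd : ∀ i, Differentiable ℝ (C i) :=
    fun i => (hC i).differentiable (by simp)
  have hFd : Differentiable ℝ F := hF.differentiable (by simp)
  have hGsm : ContDiff ℝ (⊤ : ℕ∞) G := by
    rw [hG]
    exact ((contDiff_const.mul hH).add
      (ContDiff.sum fun i _ => contDiff_const.mul (hC i))).add (contDiff_const.mul hF)
  have hGd : Differentiable ℝ G := hGsm.differentiable (by simp)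
  have hG1sm : ContDiff ℝ (⊤ : ℕ∞) (fderiv ℝ G) := hGsm.fderiv_right (by simp)
  have hG1d : Differentiable ℝ (fderiv ℝ G) := hG1sm.differentiable (by simp)
  -- conserved quantities are constant along the flow
  have key : ∀ f : (Fin m → ℝ) → ℝ, Differentiable ℝ f → (∀ z, fderiv ℝ f z (X z) = 0) →
      ∀ z t, f (φ t z) = f z := by
    intro f hfd hcons z t
    have hdiff : ∀ s : ℝ, HasDerivAt (fun τ => f (φ τ z)) (fderiv ℝ f (φ s z) (X (φ s z))) s :=
      fun s => (hfd (φ s z)).hasFDerivAt.comp_hasDerivAt s (hφderiv s z)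
    have h0 : ∀ s, deriv (fun τ => f (φ τ z)) s = 0 := fun s => by
      rw [(hdiff s).deriv]; exact hcons _
    have := is_const_of_deriv_eq_zero (fun s => (hdiff s).differentiableAt) h0 t 0
    simpa [hφ0] using this
  have hHflow : ∀ z t, H (φ t z) = H z := key H hHd hHcons
  have hCflow : ∀ i z t, C i (φ t z) = C i z := fun i => key (C i) (hCd i) (hCcons i)
  -- (F - F ze)^2 is non-increasing along the flow
  set P : (Fin m → ℝ) → ℝ := fun y => (F y - F ze) ^ 2 with hP
  have hPd : Differentiable ℝ P := ((hF.sub contDiff_const).pow 2).differentiable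
    (by simp)
  have hPle : ∀ z, fderiv ℝ P z (X z) ≤ 0 := by
    intro z
    by_cases hzz : z = ze
    · rw [hzz, hze, map_zero]
    · exact (hFcond.elim (fun h => h.1) fun h => h.1) z hzz
  have hPmono : ∀ z, Antitone fun t => P (φ t z) := by
    intro z
    apply antitone_of_deriv_nonpos
    · exact fun t => by have hd0 := (hPd (φ t z)).hasFDerivAt.comp_hasDerivAt t (hφderiv t z); exact hd0.differentiableAt
    · intro t
      have hd : HasDerivAt (fun τ => P (φ τ z)) (fderiv ℝ P (φ t z) (X (φ t z))) t := by
        have hd0 := (hPd (φ t z)).hasFDerivAt.comp_hasDerivAt t (hφderiv t z); exact hd0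
      rw [hd.deriv]
      exact hPle _
  -- the sum-of-squares function Bq and its derivatives
  set Bq : (Fin m → ℝ) → ℝ := fun z => (H z - H ze) * (H z - H ze) +
      ∑ i, (C i z - C i ze) * (C i z - C i ze) with hBqdef
  have hBqsm : ContDiff ℝ (⊤ : ℕ∞) Bq :=
    ((hH.sub contDiff_const).mul (hH.sub contDiff_const)).add
      (ContDiff.sum fun i _ => ((hC i).sub contDiff_const).mul ((hC i).sub contDiff_const))
  set Dmap : (Fin m → ℝ) → ((Fin m → ℝ) →L[ℝ] ℝ) := fun z =>
      ((H z - H ze) • fderiv ℝ H z + (H z - H ze) • fderiv ℝ H z) +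
      ∑ i, ((C i z - C i ze) • fderiv ℝ (C i) z + (C i z - C i ze) • fderiv ℝ (C i) z)
    with hDmapdef
  have hBder : ∀ z, HasFDerivAt Bq (Dmap z) z := by
    intro z
    exact (((hHd z).hasFDerivAt.sub_const (H ze)).mul
        ((hHd z).hasFDerivAt.sub_const (H ze))).add
      (HasFDerivAt.fun_sum fun i _ => (((hCd i z).hasFDerivAt.sub_const (C i ze)).mul
        (((hCd i z).hasFDerivAt.sub_const (C i ze)))))
  have hDmapze : Dmap ze = 0 := by simp [hDmapdef]
  -- second derivative of Bq at ze
  have hterm : ∀ g : (Fin m → ℝ) → ℝ, ContDiff ℝ (⊤ : ℕ∞) g →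
      HasFDerivAt (fun z => (g z - g ze) • fderiv ℝ g z)
        ((fderiv ℝ g ze).smulRight (fderiv ℝ g ze)) ze := by
    intro g hg
    have h1 : HasFDerivAt (fun z => g z - g ze) (fderiv ℝ g ze) ze :=
      ((hg.differentiable (by simp)) ze).hasFDerivAt.sub_const (g ze)
    have hg1 : ContDiff ℝ (⊤ : ℕ∞) (fderiv ℝ g) := hg.fderiv_right (by simp)
    have h2 : HasFDerivAt (fderiv ℝ g) (fderiv ℝ (fderiv ℝ g) ze) ze :=
      ((hg1.differentiable (by simp)) ze).hasFDerivAt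
    have h3 := h1.smul h2
    simp only [sub_self, zero_smul, zero_add] at h3
    exact h3
  have hDder : HasFDerivAt Dmap
      (((fderiv ℝ H ze).smulRight (fderiv ℝ H ze) +
        (fderiv ℝ H ze).smulRight (fderiv ℝ H ze)) +
       ∑ i, ((fderiv ℝ (C i) ze).smulRight (fderiv ℝ (C i) ze) +
             (fderiv ℝ (C i) ze).smulRight (fderiv ℝ (C i) ze))) ze := by
    exact ((hterm H hH).add (hterm H hH)).add
      (HasFDerivAt.fun_sum fun i _ => (hterm (C i) (hC i)).add (hterm (C i) (hC i)))
  -- the quadratic forms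
  set q : (Fin m → ℝ) → ℝ := fun v => fderiv ℝ (fderiv ℝ G) ze v v with hq
  set hfun : (Fin m → ℝ) → ℝ := fun v =>
      (fderiv ℝ H ze v * fderiv ℝ H ze v + fderiv ℝ H ze v * fderiv ℝ H ze v) +
      ∑ i, (fderiv ℝ (C i) ze v * fderiv ℝ (C i) ze v +
            fderiv ℝ (C i) ze v * fderiv ℝ (C i) ze v) with hhfun
  have hqcont : Continuous q := ((fderiv ℝ (fderiv ℝ G) ze).continuous).clm_apply continuous_id
  have hhcont : Continuous hfun := by
    apply Continuous.add
    · exact (((fderiv ℝ H ze).continuous.mul (fderiv ℝ H ze).continuous).add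
        ((fderiv ℝ H ze).continuous.mul (fderiv ℝ H ze).continuous))
    · exact continuous_finset_sum _ fun i _ =>
        (((fderiv ℝ (C i) ze).continuous.mul (fderiv ℝ (C i) ze).continuous).add
        ((fderiv ℝ (C i) ze).continuous.mul (fderiv ℝ (C i) ze).continuous))
  have hq2 : ∀ (a : ℝ) (v), q (a • v) = a ^ 2 * q v := by
    intro a v
    simp only [hq, map_smul, ContinuousLinearMap.smul_apply, smul_eq_mul]
    ring
  have hh2 : ∀ (a : ℝ) (v), hfun (a • v) = a ^ 2 * hfun v := by
    intro a v
    simp only [hhfun, map_smul, smul_eq_mul, mul_add, Finset.mul_sum]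
    congr 1
    · ring
    · exact Finset.sum_congr rfl fun i _ => by ring
  have hh0 : ∀ v, 0 ≤ hfun v := by
    intro v
    apply add_nonneg
    · have := mul_self_nonneg (fderiv ℝ H ze v); linarith
    · exact Finset.sum_nonneg fun i _ => by
        have := mul_self_nonneg (fderiv ℝ (C i) ze v); linarith
  have hzero : ∀ v, hfun v = 0 → fderiv ℝ H ze v = 0 ∧ ∀ i, fderiv ℝ (C i) ze v = 0 := by
    intro v hv
    have h1 : (0:ℝ) ≤ fderiv ℝ H ze v * fderiv ℝ H ze v + fderiv ℝ H ze v * fderiv ℝ H ze v := by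
      have := mul_self_nonneg (fderiv ℝ H ze v); linarith
    have h2 : (0:ℝ) ≤ ∑ i, (fderiv ℝ (C i) ze v * fderiv ℝ (C i) ze v +
        fderiv ℝ (C i) ze v * fderiv ℝ (C i) ze v) :=
      Finset.sum_nonneg fun i _ => by
        have := mul_self_nonneg (fderiv ℝ (C i) ze v); linarith
    have hA : fderiv ℝ H ze v * fderiv ℝ H ze v + fderiv ℝ H ze v * fderiv ℝ H ze v = 0 := by
      rw [hhfun] at hv; dsimp only at hv; linarith
    have hS : ∑ i, (fderiv ℝ (C i) ze v * fderiv ℝ (C i) ze v +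
        fderiv ℝ (C i) ze v * fderiv ℝ (C i) ze v) = 0 := by
      rw [hhfun] at hv; dsimp only at hv; linarith
    constructor
    · have : fderiv ℝ H ze v * fderiv ℝ H ze v = 0 := by linarith [mul_self_nonneg (fderiv ℝ H ze v)]
      exact mul_self_eq_zero.mp this
    · intro i
      have := (Finset.sum_eq_zero_iff_of_nonneg (fun i _ => by
        have := mul_self_nonneg (fderiv ℝ (C i) ze v); linarith)).mp hS i (Finset.mem_univ i)
      have h3 : fderiv ℝ (C i) ze v * fderiv ℝ (C i) ze v = 0 := by linarith [mul_self_nonneg (fderiv ℝ (C i) ze v)]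
      exact mul_self_eq_zero.mp h3
  obtain ⟨c, hcpos, hcdef⟩ := posdef_shift' q hfun hqcont hhcont hq2 hh2 hh0
    (fun v hv hzv => hpos v hv (hzero v hzv).1 (hzero v hzv).2)
  -- the smooth minorant K₀
  set K₀ : (Fin m → ℝ) → ℝ := fun z => G z - G ze + c * Bq z with hK₀def
  have hK₀sm : ContDiff ℝ (⊤ : ℕ∞) K₀ := (hGsm.sub contDiff_const).add (contDiff_const.mul hBqsm)
  have hK₀der : ∀ z, HasFDerivAt K₀ (fderiv ℝ G z + c • Dmap z) z := by
    intro z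
    exact ((hGd z).hasFDerivAt.sub_const (G ze)).add ((hBder z).const_mul c)
  have hK₀crit : fderiv ℝ K₀ ze = 0 := by
    rw [(hK₀der ze).fderiv, hcrit, hDmapze]
    simp
  have hK₀fderiv : fderiv ℝ K₀ = fun z => fderiv ℝ G z + c • Dmap z :=
    funext fun z => (hK₀der z).fderiv
  have hK₀pos : ∀ v : Fin m → ℝ, v ≠ 0 → 0 < fderiv ℝ (fderiv ℝ K₀) ze v v := by
    intro v hv
    have h1 : HasFDerivAt (fun z => fderiv ℝ G z + c • Dmap z)
        (fderiv ℝ (fderiv ℝ G) ze + c •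
          (((fderiv ℝ H ze).smulRight (fderiv ℝ H ze) +
            (fderiv ℝ H ze).smulRight (fderiv ℝ H ze)) +
          ∑ i, ((fderiv ℝ (C i) ze).smulRight (fderiv ℝ (C i) ze) +
             (fderiv ℝ (C i) ze).smulRight (fderiv ℝ (C i) ze)))) ze :=
      (hG1d ze).hasFDerivAt.add (hDder.const_smul c)
    rw [hK₀fderiv, h1.fderiv]
    have hthis := hcdef v hv
    rw [hq, hhfun] at hthis
    dsimp only at hthis
    simp only [ContinuousLinearMap.add_apply, ContinuousLinearMap.smul_apply,
      ContinuousLinearMap.sum_apply, ContinuousLinearMap.smulRight_apply, smul_eq_mul]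
    linarith [hthis]
  -- strict local minimum of K₀ at ze
  obtain ⟨r, hrpos, hrmin⟩ := second_deriv_test' K₀ hK₀sm ze hK₀crit hK₀pos
  have hBqze : Bq ze = 0 := by simp [hBqdef]
  have hK₀ze : K₀ ze = 0 := by simp [hK₀def, hBqze]
  -- the Lyapunov function K
  set A : (Fin m → ℝ) → ℝ := fun z => lam₀ * H z + ∑ i, lam i * C i z with hAdef
  set K : (Fin m → ℝ) → ℝ := fun z => (A z - A ze) + c * Bq z + |mu| * |F z - F ze| with hKdef
  have hGA : ∀ z, G z = A z + mu * F z := by intro z; rw [hG]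
  have hKcont : Continuous K := by
    apply Continuous.add
    · apply Continuous.add
      · exact ((continuous_const.mul hHd.continuous).add
          (continuous_finset_sum _ fun i _ => continuous_const.mul (hCd i).continuous)).sub
          continuous_const
      · exact continuous_const.mul hBqsm.continuous
    · exact continuous_const.mul ((hFd.continuous.sub continuous_const).abs)
  have hKK₀ : ∀ z, K₀ z ≤ K z := by
    intro z
    have h1 : mu * (F z - F ze) ≤ |mu| * |F z - F ze| := by
      calc mu * (F z - F ze) ≤ |mu * (F z - F ze)| := le_abs_self _
        _ = |mu| * |F z - F ze| := abs_mul _ _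
    have h2 : G z - G ze = (A z - A ze) + mu * (F z - F ze) := by
      rw [hGA z, hGA ze]; ring
    rw [hK₀def, hKdef]
    dsimp only
    rw [h2]
    linarith
  have hKze : K ze = 0 := by simp [hKdef, hBqze]
  -- K is non-increasing along the flow
  have hKflow : ∀ z, ∀ s t : ℝ, s ≤ t → K (φ t z) ≤ K (φ s z) := by
    intro z s t hst
    have hA' : ∀ τ, A (φ τ z) = A z := by
      intro τ; rw [hAdef]; dsimp only
      rw [hHflow z τ]
      congr 1
      exact Finset.sum_congr rfl fun i _ => by rw [hCflow i z τ]
    have hB' : ∀ τ, Bq (φ τ z) = Bq z := by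
      intro τ; rw [hBqdef]; dsimp only
      rw [hHflow z τ]
      congr 1
      exact Finset.sum_congr rfl fun i _ => by rw [hCflow i z τ]
    have habs : |F (φ t z) - F ze| ≤ |F (φ s z) - F ze| := by
      have h3 : P (φ t z) ≤ P (φ s z) := hPmono z hst
      rw [hP] at h3; dsimp only at h3
      rw [← Real.sqrt_sq_eq_abs, ← Real.sqrt_sq_eq_abs]
      exact Real.sqrt_le_sqrt h3
    rw [hKdef]; dsimp only
    rw [hA' t, hA' s, hB' t, hB' s]
    have := mul_le_mul_of_nonneg_left habs (abs_nonneg mu)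
    linarith
  -- construct V
  obtain ⟨ε, hεpos, hεU⟩ : ∃ ε > 0, closedBall ze ε ⊆ U :=
    Metric.nhds_basis_closedBall.mem_iff.mp hU
  set r' : ℝ := min ε (r / 2) with hr'def
  have hr'pos : 0 < r' := lt_min hεpos (by linarith)
  have hr'r : r' < r := lt_of_le_of_lt (min_le_right _ _) (by linarith)
  have hr'ε : r' ≤ ε := min_le_left _ _
  -- minimum of K on the sphere of radius r'
  obtain ⟨z₀, hz₀S, hz₀min⟩ := (isCompact_sphere ze r').exists_isMinOn
    (NormedSpace.sphere_nonempty.2 hr'pos.le) hKcont.continuousOn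
  set δ := K z₀ with hδdef
  have hz₀ball : z₀ ∈ ball ze r := by
    rw [mem_ball]
    rw [mem_sphere] at hz₀S
    rw [hz₀S]; exact hr'r
  have hz₀ne : z₀ ≠ ze := by
    intro hcon
    rw [mem_sphere, hcon, dist_self] at hz₀S
    exact absurd hz₀S.symm (ne_of_gt hr'pos)
  have hδpos : 0 < δ := lt_of_lt_of_le (hK₀ze ▸ hrmin z₀ hz₀ball hz₀ne) (hKK₀ z₀)
  set V : Set (Fin m → ℝ) := ball ze r' ∩ K ⁻¹' (Iio δ) with hVdef
  have hVopen : IsOpen V := isOpen_ball.inter (isOpen_Iio.preimage hKcont)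
  have hzeV : ze ∈ V := ⟨mem_ball_self hr'pos, by
    rw [Set.mem_preimage, Set.mem_Iio, hKze]; exact hδpos⟩
  have hVU : V ⊆ U := fun z hz => hεU (le_trans (le_of_lt (mem_ball.mp hz.1)) hr'ε)
  -- forward invariance of V
  have hinv : ∀ z ∈ V, ∀ t : ℝ, 0 ≤ t → φ t z ∈ V := by
    intro z hz t ht
    have hKz : K z < δ := hz.2
    have hKt : K (φ t z) < δ := by
      have := hKflow z 0 t ht
      rw [hφ0] at this
      linarith
    refine ⟨?_, hKt⟩
    by_contra hcon
    have hge : r' ≤ dist (φ t z) ze := not_lt.mp fun h => hcon (mem_ball.mpr h)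
    have hcφ : Continuous fun s : ℝ => φ s z :=
      continuous_iff_continuousAt.mpr fun s => (hφderiv s z).continuousAt
    have hcd : ContinuousOn (fun s : ℝ => dist (φ s z) ze) (Icc 0 t) :=
      (hcφ.dist continuous_const).continuousOn
    have hmem : r' ∈ Icc (dist (φ 0 z) ze) (dist (φ t z) ze) := by
      constructor
      · rw [hφ0]; exact le_of_lt (mem_ball.mp hz.1)
      · exact hge
    obtain ⟨s, hs, hseq⟩ := intermediate_value_Icc ht hcd hmem
    have hsphere : φ s z ∈ sphere ze r' := by rw [mem_sphere]; exact hseq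
    have h1 : δ ≤ K (φ s z) := isMinOn_iff.mp hz₀min _ hsphere
    have h2 : K (φ s z) ≤ K z := by
      have := hKflow z 0 s hs.1
      rwa [hφ0] at this
    linarith
  refine ⟨V, hVopen, hzeV, hVU, ?_, fun z hz t ht => hVU (hinv z hz t ht)⟩
  rintro s t hst y ⟨z, hzV, rfl⟩
  refine ⟨φ (t - s) z, hinv z hzV (t - s) (by linarith), ?_⟩
  rw [← hφadd]
  norm_num
end

section
/- Let X : ℝ^m → ℝ^m be a smooth vector field admitting a global flow φ : ℝ × ℝ^m → ℝ^m, and let z_e be an equilibrium: X(z_e) = 0. Let H, C₁, …, C_k : ℝ^m → ℝ be smooth functions conserved along X (dH(z)(X(z)) = 0 and dC_i(z)(X(z)) = 0 for all z), and let F : ℝ^m → ℝ be smooth with the strict inequality d((F − F(z_e))²)(z)(X(z)) < 0 for every z ≠ z_e. Assume there exist constants λ₀, λ₁, …, λ_k, μ such that G := λ₀H + λ₁C₁ + … + λ_kC_k + μF satisfies dG(z_e) = 0 and the Hessian of G at z_e is positive definite on W := ker dH(z_e) ∩ ker dC₁(z_e) ∩ … ∩ ker dC_k(z_e). Then z_e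 is asymptotically stable: there is a neighborhood V of z_e such that φ(t, V) ⊆ φ(s, V) whenever t > s, and for every neighborhood W' of z_e there exists T > 0 with φ(t, V) ⊆ W' for all t ≥ T. -/
/-!
`L = (F - F ze)²` is a strict Lyapunov function. It is nonnegative and vanishes at `ze`; at any
zero of `L` its differential vanishes, so the strict decrease along `X` forces `L > 0` off `ze`.
Hence `L` is nonincreasing along orbits, and if `c` is the minimum of `L` on the unit sphere
around `ze`, the set `V = ball ze 1 ∩ {L < c}` is forward invariant (an orbit leaving the ball
would meet the sphere with `L ≥ c`). For attraction, off a neighbourhood `W'` of `ze` the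
function `L` is bounded below by some `δ > 0` on the closed ball, and on the compact region
`{δ ≤ L}` of the ball `L` decreases at a rate at least `ε > 0`; an orbit of `V` staying outside
`W'` up to time `c / ε` would therefore drive `L` below `0`.
-/

open Set Metric Filter Topology

variable {E : Type*} [NormedAddCommGroup E] [NormedSpace ℝ E]

noncomputable def orbitalDeriv (X : E → E) (L : E → ℝ) (z : E) : ℝ := fderiv ℝ L z (X z)

structure IsFlow (X : E → E) (φ : ℝ → E → E) : Prop where
  map_zero : ∀ z, φ 0 z = z
  map_add : ∀ t s z, φ (t + s) z = φ t (φ s z)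
  hasDerivAt : ∀ t z, HasDerivAt (fun τ => φ τ z) (X (φ t z)) t

section OrbitalDeriv

variable {X : E → E} {L : E → ℝ}

theorem orbitalDeriv_eq_zero_of_isLocalMin {z : E} (h : IsLocalMin L z) :
    orbitalDeriv X L z = 0 := by
  simp [orbitalDeriv, h.fderiv_eq_zero]

theorem pos_of_orbitalDeriv_neg (hL0 : ∀ z, 0 ≤ L z) {z : E} (h : orbitalDeriv X L z < 0) :
    0 < L z := by
  refine (hL0 z).lt_of_ne fun hz => h.ne (orbitalDeriv_eq_zero_of_isLocalMin ?_)
  exact Eventually.of_forall fun y => hz ▸ hL0 y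

theorem orbitalDeriv_nonpos {ze : E} (hL0 : ∀ z, 0 ≤ L z) (hLze : L ze = 0)
    (hstrict : ∀ z, z ≠ ze → orbitalDeriv X L z < 0) (z : E) : orbitalDeriv X L z ≤ 0 := by
  rcases eq_or_ne z ze with rfl | hz
  · exact (orbitalDeriv_eq_zero_of_isLocalMin
      (Eventually.of_forall fun y => hLze ▸ hL0 y)).le
  · exact (hstrict z hz).le

theorem hasDerivAt_comp_integralCurve {γ : ℝ → E} {t : ℝ} (hγ : HasDerivAt γ (X (γ t)) t)
    (hL : DifferentiableAt ℝ L (γ t)) : HasDerivAt (L ∘ γ) (orbitalDeriv X L (γ t)) t :=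
  hL.hasFDerivAt.comp_hasDerivAt t hγ

variable {γ : ℝ → E} (hγ : ∀ t, HasDerivAt γ (X (γ t)) t) (hL : Differentiable ℝ L)
include hγ hL

theorem antitone_comp_integralCurve (h : ∀ z, orbitalDeriv X L z ≤ 0) : Antitone (L ∘ γ) :=
  antitone_of_deriv_nonpos
    (fun t => (hasDerivAt_comp_integralCurve (hγ t) (hL _)).differentiableAt)
    fun t => (hasDerivAt_comp_integralCurve (hγ t) (hL _)).deriv ▸ h _

theorem comp_integralCurve_le_sub_mul {ε T : ℝ} (hT : 0 ≤ T)
    (h : ∀ t ∈ Icc 0 T, orbitalDeriv X L (γ t) ≤ -ε) : L (γ T) ≤ L (γ 0) - ε * T := by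
  have hderiv t := hasDerivAt_comp_integralCurve (hγ t) (hL (γ t))
  have := (convex_Icc 0 T).image_sub_le_mul_sub_of_deriv_le
    (fun t _ => (hderiv t).continuousAt.continuousWithinAt)
    (fun t _ => (hderiv t).differentiableAt.differentiableWithinAt)
    (fun t ht => (hderiv t).deriv ▸ h t (interior_subset ht))
    0 (left_mem_Icc.2 hT) T (right_mem_Icc.2 hT) hT
  simp only [Function.comp_apply, sub_zero] at this
  linarith

end OrbitalDeriv

namespace IsFlow

variable {X : E → E} {φ : ℝ → E → E} (hφ : IsFlow X φ)
include hφ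

theorem continuous_orbit (z : E) : Continuous fun t => φ t z :=
  continuous_iff_continuousAt.2 fun t => (hφ.hasDerivAt t z).continuousAt

theorem image_subset_image_of_mapsTo {V : Set E} (hV : ∀ τ, 0 ≤ τ → MapsTo (φ τ) V V)
    {s t : ℝ} (hst : s ≤ t) : φ t '' V ⊆ φ s '' V := by
  rintro _ ⟨z, hz, rfl⟩
  refine ⟨φ (t - s) z, hV _ (sub_nonneg.2 hst) hz, ?_⟩
  rw [← hφ.map_add, add_sub_cancel]

theorem mapsTo_ball_inter_sublevel {L : E → ℝ} (hanti : ∀ z, Antitone fun t => L (φ t z))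
    {ze : E} {r c : ℝ} (hc : ∀ z ∈ sphere ze r, c ≤ L z) {τ : ℝ} (hτ : 0 ≤ τ) :
    MapsTo (φ τ) (ball ze r ∩ {z | L z < c}) (ball ze r ∩ {z | L z < c}) := by
  rintro z ⟨hzr, hzc : L z < c⟩
  have hLτ : ∀ t, 0 ≤ t → L (φ t z) < c := fun t ht =>
    (hanti z ht).trans_lt (by simpa only [hφ.map_zero] using hzc)
  refine ⟨?_, hLτ τ hτ⟩
  by_contra hout
  obtain ⟨t, ht, hdist⟩ : ∃ t ∈ Icc 0 τ, dist (φ t z) ze = r := by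
    refine intermediate_value_Icc hτ ((hφ.continuous_orbit z).dist continuous_const).continuousOn
      ⟨?_, ?_⟩
    · rw [hφ.map_zero]; exact (mem_ball.1 hzr).le
    · exact not_lt.1 hout
  exact (hc _ hdist).not_gt (hLτ t ht.1)

theorem exists_forall_ge_image_subset [ProperSpace E] {L : E → ℝ} (hL : ContDiff ℝ 1 L)
    (hX : Continuous X) {ze : E} (hL0 : ∀ z, 0 ≤ L z) (hLze : L ze = 0)
    (hstrict : ∀ z, z ≠ ze → orbitalDeriv X L z < 0) {V : Set E} {r c : ℝ} (hc : 0 < c)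
    (hV : ∀ τ, 0 ≤ τ → MapsTo (φ τ) V V) (hVr : V ⊆ closedBall ze r)
    (hVc : ∀ z ∈ V, L z < c) {W : Set E} (hW : W ∈ 𝓝 ze) : ∃ T > 0, ∀ t ≥ T, φ t '' V ⊆ W := by
  have hLd : Differentiable ℝ L := hL.differentiable one_ne_zero
  have hLpos : ∀ z, z ≠ ze → 0 < L z := fun z hz => pos_of_orbitalDeriv_neg hL0 (hstrict z hz)
  obtain ⟨δ, hδ, hδW⟩ : ∃ δ > 0, ∀ z ∈ closedBall ze r \ interior W, δ ≤ L z :=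
    ((isCompact_closedBall ze r).diff isOpen_interior).exists_forall_le'
      hLd.continuous.continuousOn fun z hz =>
        hLpos z fun h => hz.2 (h ▸ mem_interior_iff_mem_nhds.2 hW)
  obtain ⟨ε, hε, hεK⟩ :
      ∃ ε > 0, ∀ z ∈ closedBall ze r ∩ {z | δ ≤ L z}, ε ≤ -orbitalDeriv X L z := by
    refine ((isCompact_closedBall ze r).inter_right (isClosed_le continuous_const
      hLd.continuous)).exists_forall_le' ?_ fun z hz => neg_pos.2 (hstrict z ?_)
    · exact ((hL.continuous_fderiv one_ne_zero).clm_apply hX).neg.continuousOn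
    · rintro rfl
      exact hz.2.not_gt (hLze ▸ hδ)
  refine ⟨c / ε, div_pos hc hε, fun t ht => ?_⟩
  rintro _ ⟨z, hz, rfl⟩
  by_contra hout
  have ht0 : 0 ≤ t := (div_pos hc hε).le.trans ht
  have hanti := antitone_comp_integralCurve (fun t => hφ.hasDerivAt t z) hLd
    (orbitalDeriv_nonpos hL0 hLze hstrict)
  have hdecay := comp_integralCurve_le_sub_mul (fun t => hφ.hasDerivAt t z) hLd ht0
    (ε := ε) fun s hs => by
      refine le_neg_of_le_neg (hεK _ ⟨hVr (hV s hs.1 hz), ?_⟩)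
      exact (hδW _ ⟨hVr (hV t ht0 hz), fun h => hout (interior_subset h)⟩).trans (hanti hs.2)
  have hεt : c ≤ ε * t := (div_le_iff₀' hε).1 ht
  simp only [hφ.map_zero] at hdecay
  linarith [hL0 (φ t z), hVc z hz]

theorem asymptotically_stable_of_strict_lyapunov [ProperSpace E] {L : E → ℝ}
    (hL : ContDiff ℝ 1 L) (hX : Continuous X) {ze : E} (hL0 : ∀ z, 0 ≤ L z) (hLze : L ze = 0)
    (hstrict : ∀ z, z ≠ ze → orbitalDeriv X L z < 0) :
    ∃ V ∈ 𝓝 ze,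
      (∀ s t : ℝ, s < t → φ t '' V ⊆ φ s '' V) ∧
      (∀ W ∈ 𝓝 ze, ∃ T > (0 : ℝ), ∀ t ≥ T, φ t '' V ⊆ W) := by
  have hLc : Continuous L := hL.continuous
  obtain ⟨c, hc, hcL⟩ : ∃ c > 0, ∀ z ∈ sphere ze 1, c ≤ L z :=
    (isCompact_sphere ze 1).exists_forall_le' hLc.continuousOn fun z hz =>
      pos_of_orbitalDeriv_neg hL0 (hstrict z (ne_of_mem_sphere hz one_ne_zero))
  have hV τ (hτ : 0 ≤ τ) := hφ.mapsTo_ball_inter_sublevel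
    (fun z => antitone_comp_integralCurve (fun t => hφ.hasDerivAt t z)
      (hL.differentiable one_ne_zero) (orbitalDeriv_nonpos hL0 hLze hstrict)) hcL hτ
  refine ⟨ball ze 1 ∩ {z | L z < c}, ?_,
    fun s t hst => hφ.image_subset_image_of_mapsTo hV hst.le,
    fun W hW => hφ.exists_forall_ge_image_subset hL hX hL0 hLze hstrict hc hV
      (inter_subset_left.trans ball_subset_closedBall) (fun z hz => hz.2) hW⟩
  exact (isOpen_ball.inter (isOpen_lt hLc continuous_const)).mem_nhds
    ⟨mem_ball_self one_pos, by simpa [hLze] using hc⟩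

end IsFlow

theorem stmt_5_general (m : ℕ)
    (X : (Fin m → ℝ) → (Fin m → ℝ)) (hX : ContDiff ℝ (⊤ : ℕ∞) X)
    (φ : ℝ → (Fin m → ℝ) → (Fin m → ℝ))
    (hφ0 : ∀ z, φ 0 z = z)
    (hφadd : ∀ t s z, φ (t + s) z = φ t (φ s z))
    (hφderiv : ∀ t z, HasDerivAt (fun τ => φ τ z) (X (φ t z)) t)
    (ze : Fin m → ℝ)
    (F : (Fin m → ℝ) → ℝ)
    (hF : ContDiff ℝ (⊤ : ℕ∞) F)
    (hFstrict : ∀ z, z ≠ ze → fderiv ℝ (fun y => (F y - F ze) ^ 2) z (X z) < 0) :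
    ∃ V ∈ nhds ze,
      (∀ s t : ℝ, s < t → φ t '' V ⊆ φ s '' V) ∧
      (∀ W' ∈ nhds ze, ∃ T > (0 : ℝ), ∀ t ≥ T, φ t '' V ⊆ W') :=
  IsFlow.asymptotically_stable_of_strict_lyapunov ⟨hφ0, hφadd, hφderiv⟩
    (((hF.sub contDiff_const).pow 2).of_le (by simp)) hX.continuous
    (fun z => sq_nonneg _) (by simp) hFstrict

/-- Strict-inequality case of the energy-Casimir theorem: with the notation of the
energy-Casimir theorem, if `d((F − F(ze))²)(z)(X(z)) < 0` for every `z ≠ ze` and the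
combination `λ₀H + ΣλᵢCᵢ + μF` has a critical point at `ze` with Hessian positive definite
on `W = ker dH(ze) ∩ ⋂ᵢ ker dCᵢ(ze)`, then `ze` is asymptotically stable. -/
theorem stmt_5 (m k : ℕ)
    (X : (Fin m → ℝ) → (Fin m → ℝ)) (hX : ContDiff ℝ (⊤ : ℕ∞) X)
    (φ : ℝ → (Fin m → ℝ) → (Fin m → ℝ))
    (hφ0 : ∀ z, φ 0 z = z)
    (hφadd : ∀ t s z, φ (t + s) z = φ t (φ s z))
    (hφderiv : ∀ t z, HasDerivAt (fun τ => φ τ z) (X (φ t z)) t)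
    (ze : Fin m → ℝ) (hze : X ze = 0)
    (H : (Fin m → ℝ) → ℝ) (C : Fin k → (Fin m → ℝ) → ℝ) (F : (Fin m → ℝ) → ℝ)
    (hH : ContDiff ℝ (⊤ : ℕ∞) H) (hC : ∀ i, ContDiff ℝ (⊤ : ℕ∞) (C i))
    (hF : ContDiff ℝ (⊤ : ℕ∞) F)
    (hHcons : ∀ z, fderiv ℝ H z (X z) = 0)
    (hCcons : ∀ i z, fderiv ℝ (C i) z (X z) = 0)
    (hFstrict : ∀ z, z ≠ ze → fderiv ℝ (fun y => (F y - F ze) ^ 2) z (X z) < 0)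
    (lam₀ : ℝ) (lam : Fin k → ℝ) (mu : ℝ)
    (G : (Fin m → ℝ) → ℝ)
    (hG : G = fun z => lam₀ * H z + (∑ i, lam i * C i z) + mu * F z)
    (hcrit : fderiv ℝ G ze = 0)
    (hpos : ∀ v : Fin m → ℝ, v ≠ 0 → fderiv ℝ H ze v = 0 →
      (∀ i, fderiv ℝ (C i) ze v = 0) → 0 < fderiv ℝ (fderiv ℝ G) ze v v) :
    ∃ V ∈ nhds ze,
      (∀ s t : ℝ, s < t → φ t '' V ⊆ φ s '' V) ∧
      (∀ W' ∈ nhds ze, ∃ T > (0 : ℝ), ∀ t ≥ T, φ t '' V ⊆ W') :=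
  stmt_5_general m X hX φ hφ0 hφadd hφderiv ze F hF hFstrict
end

section
/- Let V be a finite-dimensional real vector space and let B₁, B₂ : V × V → ℝ be symmetric bilinear forms. Assume B₂ is positive semidefinite and its kernel is the subspace W = {v ∈ V : B₂(v, u) = 0 for all u ∈ V}, and assume B₁ is positive definite when restricted to W (B₁(w,w) > 0 for all nonzero w ∈ W). Then there exists r > 0 such that for every ε with 0 < ε ≤ r, the symmetric bilinear form ε·B₁ + B₂ is positive definite on all of V. -/
/-!
By Cauchy–Schwarz, a vector with `B₂ v v = 0` lies in the kernel of `B₂`, so the hypothesis says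
that `B₁` is positive on the null cone of `B₂`. Both quadratic forms are homogeneous of degree two,
so it suffices to make `ε B₁ + B₂` positive on the unit sphere of some norm. Near a point `(0, y)`
of `ℝ × sphere`, either `B₂ y y > 0` and `ε B₁ + B₂` stays positive for small `ε`, or `B₁ y y > 0`
and both terms are eventually nonnegative with the first one positive; compactness of the
sphere makes the choice of `ε` uniform.
-/

open Topology Metric

theorem IsCompact.exists_pos_forall_mul_add_pos {X : Type*} [TopologicalSpace X] {S : Set X}
    (hS : IsCompact S) {f g : X → ℝ} (hf : Continuous f) (hg : Continuous g)
    (hg_nonneg : ∀ x, 0 ≤ g x) (hfg : ∀ x ∈ S, g x = 0 → 0 < f x) :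
    ∃ r > (0 : ℝ), ∀ ε, 0 < ε → ε ≤ r → ∀ x ∈ S, 0 < ε * f x + g x := by
  have hlocal : ∀ y ∈ S, ∀ᶠ p : ℝ × X in 𝓝 (0, y), 0 < p.1 → 0 < p.1 * f p.2 + g p.2 := by
    intro y hy
    rcases (hg_nonneg y).lt_or_eq with hgy | hgy
    · have hcont : Continuous fun p : ℝ × X => p.1 * f p.2 + g p.2 := by fun_prop
      filter_upwards [continuousAt_const.eventually_lt hcont.continuousAt (by simpa using hgy)]
        with p hp _ using hp
    · have hfy : 0 < f y := hfg y hy hgy.symm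
      filter_upwards [continuousAt_const.eventually_lt (hf.comp continuous_snd).continuousAt
        (by simpa using hfy)] with p hp hε
      exact add_pos_of_pos_of_nonneg (mul_pos hε hp) (hg_nonneg _)
  obtain ⟨δ, hδ, hball⟩ :=
    Metric.eventually_nhds_iff.mp (hS.eventually_forall_of_forall_eventually
      (P := fun ε x => 0 < ε → 0 < ε * f x + g x) hlocal)
  refine ⟨δ / 2, by positivity, fun ε hε hεr x hx => hball ?_ x hx hε⟩
  rw [Real.dist_eq, sub_zero, abs_of_pos hε]
  linarith

namespace LinearMap.BilinForm

theorem continuous_apply_self {E : Type*} [AddCommGroup E] [Module ℝ E] [TopologicalSpace E]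
    [IsTopologicalAddGroup E] [ContinuousSMul ℝ E] [FiniteDimensional ℝ E] [T2Space E]
    (B : LinearMap.BilinForm ℝ E) : Continuous fun v => B v v := by
  have : IsModuleTopology ℝ E := isModuleTopologyOfFiniteDimensional
  exact (IsModuleTopology.continuous_bilinear_of_finite_left B).comp
    (continuous_id.prodMk continuous_id)

theorem exists_pos_smul_add_posDef_of_normedSpace {E : Type*} [NormedAddCommGroup E]
    [NormedSpace ℝ E] [FiniteDimensional ℝ E] (B₁ B₂ : LinearMap.BilinForm ℝ E)
    (h₂ : ∀ v, 0 ≤ B₂ v v) (h₁ : ∀ v, v ≠ 0 → B₂ v v = 0 → 0 < B₁ v v) :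
    ∃ r > (0 : ℝ), ∀ ε, 0 < ε → ε ≤ r → ∀ v, v ≠ 0 → 0 < ε * B₁ v v + B₂ v v := by
  obtain ⟨r, hr, hsphere⟩ := (isCompact_sphere (0 : E) 1).exists_pos_forall_mul_add_pos
    B₁.continuous_apply_self B₂.continuous_apply_self h₂
    fun v hv => h₁ v (ne_zero_of_mem_unit_sphere ⟨v, hv⟩)
  refine ⟨r, hr, fun ε hε hεr v hv => ?_⟩
  have hv' : 0 < ‖v‖ := norm_pos_iff.mpr hv
  set u := ‖v‖⁻¹ • v
  have hu : u ∈ sphere (0 : E) 1 := by simp [u, norm_smul, hv'.ne']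
  have hvu : v = ‖v‖ • u := by simp [u, smul_smul, hv'.ne']
  have hpos : 0 < ‖v‖ ^ 2 * (ε * B₁ u u + B₂ u u) := by
    have := hsphere ε hε hεr u hu
    positivity
  rw [hvu]
  simp only [map_smul, LinearMap.smul_apply, smul_eq_mul]
  linarith

theorem exists_pos_smul_add_posDef {V : Type*} [AddCommGroup V] [Module ℝ V]
    [FiniteDimensional ℝ V] (B₁ B₂ : LinearMap.BilinForm ℝ V)
    (h₂ : ∀ v, 0 ≤ B₂ v v) (h₁ : ∀ v, v ≠ 0 → B₂ v v = 0 → 0 < B₁ v v) :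
    ∃ r > (0 : ℝ), ∀ ε, 0 < ε → ε ≤ r → ∀ v, v ≠ 0 → 0 < ε * B₁ v v + B₂ v v := by
  let e := (Module.finBasis ℝ V).equivFun.symm
  obtain ⟨r, hr, h⟩ := exists_pos_smul_add_posDef_of_normedSpace
    (B₁.compl₁₂ e.toLinearMap e.toLinearMap) (B₂.compl₁₂ e.toLinearMap e.toLinearMap)
    (fun x => h₂ (e x)) (fun x hx => h₁ (e x) (e.map_ne_zero_iff.mpr hx))
  refine ⟨r, hr, fun ε hε hεr v hv => ?_⟩
  simpa using h ε hε hεr (e.symm v) (e.symm.map_ne_zero_iff.mpr hv)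

end LinearMap.BilinForm

theorem stmt_6_general (V : Type*) [AddCommGroup V] [Module ℝ V] [FiniteDimensional ℝ V]
    (B₁ B₂ : LinearMap.BilinForm ℝ V)
    (h₂sym : ∀ u v : V, B₂ u v = B₂ v u)
    (h₂pos : ∀ v : V, 0 ≤ B₂ v v)
    (h₁W : ∀ w : V, w ≠ 0 → (∀ u : V, B₂ w u = 0) → 0 < B₁ w w) :
    ∃ r > (0 : ℝ), ∀ ε : ℝ, 0 < ε → ε ≤ r →
      ∀ v : V, v ≠ 0 → 0 < ε * B₁ v v + B₂ v v := by
  refine B₁.exists_pos_smul_add_posDef B₂ h₂pos fun v hv hv0 => h₁W v hv fun u => ?_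
  have hker : v ∈ LinearMap.ker B₂ :=
    (B₂.apply_apply_same_eq_zero_iff h₂pos (LinearMap.BilinForm.isSymm_iff.mp ⟨h₂sym⟩)).mp hv0
  exact LinearMap.congr_fun (LinearMap.mem_ker.mp hker) u

/-- Patrick's lemma: if `B₂` is a positive semidefinite symmetric bilinear form on a
finite-dimensional real vector space whose kernel is `W`, and the symmetric bilinear form
`B₁` is positive definite on `W`, then `ε·B₁ + B₂` is positive definite on all of `V` for
every sufficiently small `ε > 0`. -/
theorem stmt_6 (V : Type*) [AddCommGroup V] [Module ℝ V] [FiniteDimensional ℝ V]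
    (B₁ B₂ : LinearMap.BilinForm ℝ V)
    (h₁sym : ∀ u v : V, B₁ u v = B₁ v u)
    (h₂sym : ∀ u v : V, B₂ u v = B₂ v u)
    (h₂pos : ∀ v : V, 0 ≤ B₂ v v)
    (h₁W : ∀ w : V, w ≠ 0 → (∀ u : V, B₂ w u = 0) → 0 < B₁ w w) :
    ∃ r > (0 : ℝ), ∀ ε : ℝ, 0 < ε → ε ≤ r →
      ∀ v : V, v ≠ 0 → 0 < ε * B₁ v v + B₂ v v :=
  stmt_6_general V B₁ B₂ h₂sym h₂pos h₁W
end

section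
/- Consider the planar ODE ẋ = −2xy, ẏ = 2x² (the Poisson formulation of the two-dimensional Toda lattice with bracket {x,y} = −x and Hamiltonian H = x² + y²). For every b > 0, the equilibrium (0, b) is Lyapunov stable: for every ε > 0 there exists δ > 0 such that every differentiable curve γ : [0,∞) → ℝ² satisfying γ'(t) = (−2γ₁(t)γ₂(t), 2γ₁(t)²) for all t ≥ 0 and ‖γ(0) − (0,b)‖ < δ satisfies ‖γ(t) − (0,b)‖ < ε for all t ≥ 0. -/
/-!
`H = x² + y²` is a first integral and `ẏ = 2x² ≥ 0`, so along a solution `y` increases while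
`y² ≤ H`. Hence `y(t)` stays between `y(0)` and `|x(0)| + |y(0)|`, and once `y(0) ≥ 0` also
`x(t)² = H − y(t)² ≤ H − y(0)² = x(0)²`. Near `(0, b)` with `b > 0` all of these bounds are small
perturbations of the initial data.
-/

open Set

section RightDerivative

variable {f f' : ℝ → ℝ} {a : ℝ}

theorem monotoneOn_Ici_of_hasDerivWithinAt_nonneg
    (hf : ∀ t ∈ Ici a, HasDerivWithinAt f (f' t) (Ici a) t) (hf' : ∀ t ∈ Ioi a, 0 ≤ f' t) :
    MonotoneOn f (Ici a) := by
  refine monotoneOn_of_hasDerivWithinAt_nonneg (convex_Ici a)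
    (fun t ht => (hf t ht).continuousWithinAt) (fun t ht => ?_) (by rwa [interior_Ici])
  rw [interior_Ici] at ht ⊢
  exact (hf t (Ioi_subset_Ici_self ht)).mono Ioi_subset_Ici_self

theorem eq_of_hasDerivWithinAt_Ici_zero (hf : ∀ t ∈ Ici a, HasDerivWithinAt f 0 (Ici a) t)
    {t : ℝ} (ht : a ≤ t) : f t = f a := by
  have hmono := monotoneOn_Ici_of_hasDerivWithinAt_nonneg hf fun _ _ => le_rfl
  have hanti := monotoneOn_Ici_of_hasDerivWithinAt_nonneg (fun s hs => (hf s hs).neg)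
    fun _ _ => neg_zero.ge
  exact le_antisymm (neg_le_neg_iff.1 (hanti self_mem_Ici ht ht))
    (hmono self_mem_Ici ht ht)

end RightDerivative

def IsTodaSolution (γ : ℝ → ℝ × ℝ) (a : ℝ) : Prop :=
  ∀ t ∈ Ici a, HasDerivWithinAt γ (-2 * (γ t).1 * (γ t).2, 2 * (γ t).1 ^ 2) (Ici a) t

namespace IsTodaSolution

variable {γ : ℝ → ℝ × ℝ} {a t : ℝ}

theorem hasDerivWithinAt_fst (hγ : IsTodaSolution γ a) (ht : t ∈ Ici a) :
    HasDerivWithinAt (fun s => (γ s).1) (-2 * (γ t).1 * (γ t).2) (Ici a) t :=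
  (ContinuousLinearMap.fst ℝ ℝ ℝ).hasFDerivAt.comp_hasDerivWithinAt t (hγ t ht)

theorem hasDerivWithinAt_snd (hγ : IsTodaSolution γ a) (ht : t ∈ Ici a) :
    HasDerivWithinAt (fun s => (γ s).2) (2 * (γ t).1 ^ 2) (Ici a) t :=
  (ContinuousLinearMap.snd ℝ ℝ ℝ).hasFDerivAt.comp_hasDerivWithinAt t (hγ t ht)

theorem monotoneOn_snd (hγ : IsTodaSolution γ a) : MonotoneOn (fun t => (γ t).2) (Ici a) :=
  monotoneOn_Ici_of_hasDerivWithinAt_nonneg (fun _ hs => hγ.hasDerivWithinAt_snd hs)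
    fun _ _ => by positivity

theorem energy_eq (hγ : IsTodaSolution γ a) (ht : a ≤ t) :
    (γ t).1 ^ 2 + (γ t).2 ^ 2 = (γ a).1 ^ 2 + (γ a).2 ^ 2 := by
  refine eq_of_hasDerivWithinAt_Ici_zero (f := fun s => (γ s).1 ^ 2 + (γ s).2 ^ 2)
    (fun s hs => ?_) ht
  refine (((hγ.hasDerivWithinAt_fst hs).fun_pow 2).fun_add
    ((hγ.hasDerivWithinAt_snd hs).fun_pow 2)).congr_deriv ?_
  push_cast
  ring

theorem snd_le (hγ : IsTodaSolution γ a) (ht : a ≤ t) : (γ t).2 ≤ |(γ a).1| + |(γ a).2| := by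
  have hsq : (γ t).2 ^ 2 ≤ (|(γ a).1| + |(γ a).2|) ^ 2 := by
    nlinarith [hγ.energy_eq ht, sq_abs (γ a).1, sq_abs (γ a).2, abs_nonneg (γ a).1,
      abs_nonneg (γ a).2, sq_nonneg (γ t).1]
  exact (abs_le_of_sq_le_sq' hsq (by positivity)).2

theorem abs_fst_le (hγ : IsTodaSolution γ a) (ha : 0 ≤ (γ a).2) (ht : a ≤ t) :
    |(γ t).1| ≤ |(γ a).1| := by
  have hy : (γ a).2 ≤ (γ t).2 := hγ.monotoneOn_snd self_mem_Ici ht ht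
  exact sq_le_sq.1 (by nlinarith [hγ.energy_eq ht])

end IsTodaSolution

/-- Lyapunov stability of the equilibrium `(0, b)`, `b > 0`, of the planar ODE
`ẋ = −2xy, ẏ = 2x²` (Poisson formulation of the two-dimensional Toda lattice). -/
theorem stmt_7 (b : ℝ) (hb : 0 < b) :
    ∀ ε > 0, ∃ δ > 0, ∀ γ : ℝ → ℝ × ℝ,
      (∀ t ∈ Set.Ici (0 : ℝ), HasDerivWithinAt γ
        (-2 * (γ t).1 * (γ t).2, 2 * (γ t).1 ^ 2) (Set.Ici 0) t) →
      ‖γ 0 - ((0 : ℝ), b)‖ < δ → ∀ t ≥ (0 : ℝ), ‖γ t - ((0 : ℝ), b)‖ < ε := by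
  intro ε hε
  refine ⟨min (ε / 2) b, by positivity, fun γ (hγ : IsTodaSolution γ 0) h0 t ht => ?_⟩
  have hδ : min (ε / 2) b ≤ ε / 2 := min_le_left _ _
  have hδb : min (ε / 2) b ≤ b := min_le_right _ _
  simp only [Prod.norm_def, Prod.fst_sub, Prod.snd_sub, Real.norm_eq_abs, sub_zero,
    max_lt_iff] at h0 ⊢
  obtain ⟨hx0, hy0⟩ := h0
  have hy0' := abs_lt.1 hy0
  have hy0_nonneg : 0 ≤ (γ 0).2 := by linarith
  have hx : |(γ t).1| ≤ |(γ 0).1| := hγ.abs_fst_le hy0_nonneg ht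
  have hy_lower : (γ 0).2 ≤ (γ t).2 := hγ.monotoneOn_snd self_mem_Ici ht ht
  have hy_upper : (γ t).2 ≤ |(γ 0).1| + |(γ 0).2| := hγ.snd_le ht
  rw [abs_of_nonneg hy0_nonneg] at hy_upper
  exact ⟨by linarith, abs_lt.2 ⟨by linarith, by linarith⟩⟩
end

section
/- Consider the planar ODE ẋ = −2xy, ẏ = 2x² (the Poisson formulation of the two-dimensional Toda lattice). For every b < 0, the equilibrium (0, b) is Lyapunov unstable: there exists ε > 0 such that for every δ > 0 there is a differentiable curve γ : [0,∞) → ℝ² satisfying γ'(t) = (−2γ₁(t)γ₂(t), 2γ₁(t)²) for all t ≥ 0, with ‖γ(0) − (0,b)‖ < δ and ‖γ(t) − (0,b)‖ ≥ ε for some t ≥ 0. -/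
/-!
On the circle `x² + y² = r²` the Toda flow has the explicit heteroclinic orbit
`s ↦ (r sech 2rs, r tanh 2rs)`, which leaves the equilibrium `(0, -r)` at `s = -∞` and passes
through `(r, 0)` at `s = 0`. Shifting it in time gives solutions starting arbitrarily close to
`(0, -r)` that later reach distance `r` from it.
-/

open Real Filter Topology

theorem Real.tendsto_cosh_atBot : Tendsto cosh atBot atTop := by
  refine tendsto_atTop_mono (fun u => ?_)
    ((tendsto_exp_atTop.comp tendsto_neg_atBot_atTop).atTop_div_const two_pos)
  show exp (-u) / 2 ≤ cosh u
  rw [cosh_eq]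
  linarith [exp_pos u]

theorem Real.tanh_eq_exp_mul_inv_cosh_sub_one (u : ℝ) : tanh u = exp u * (cosh u)⁻¹ - 1 := by
  rw [tanh_eq_sinh_div_cosh, ← sinh_add_cosh]
  field_simp [(cosh_pos u).ne']
  ring

theorem Real.tendsto_tanh_atBot : Tendsto tanh atBot (𝓝 (-1)) := by
  have h := (tendsto_exp_atBot.mul tendsto_cosh_atBot.inv_tendsto_atTop).sub_const 1
  rw [zero_mul, zero_sub] at h
  exact h.congr fun u => (tanh_eq_exp_mul_inv_cosh_sub_one u).symm

def todaField (p : ℝ × ℝ) : ℝ × ℝ := (-2 * p.1 * p.2, 2 * p.1 ^ 2)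

noncomputable def todaHeteroclinic (r s : ℝ) : ℝ × ℝ := (r / cosh (2 * r * s), r * tanh (2 * r * s))

theorem hasDerivAt_todaHeteroclinic (r s : ℝ) :
    HasDerivAt (todaHeteroclinic r) (todaField (todaHeteroclinic r s)) s := by
  have hu : HasDerivAt (fun s => 2 * r * s) (2 * r) s := by
    simpa using (hasDerivAt_id s).const_mul (2 * r)
  have hcosh := (hasDerivAt_cosh _).comp s hu
  have hsinh := (hasDerivAt_sinh _).comp s hu
  have hC := (cosh_pos (2 * r * s)).ne'
  have hx := (hasDerivAt_const s r).div hcosh hC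
  have hy := (hsinh.div hcosh hC).const_mul r
  have hsplit : todaHeteroclinic r =
      fun s => (r / cosh (2 * r * s), r * (sinh (2 * r * s) / cosh (2 * r * s))) := by
    funext s
    simp only [todaHeteroclinic, tanh_eq_sinh_div_cosh]
  rw [hsplit]
  refine (hx.prodMk hy).congr_deriv ?_
  simp only [todaField, Function.comp_apply, Prod.mk.injEq]
  have hpyth := cosh_sq_sub_sinh_sq (2 * r * s)
  generalize 2 * r * s = u at hC hpyth ⊢
  constructor
  · field_simp
    ring
  · field_simp
    linear_combination r ^ 2 * hpyth

theorem todaHeteroclinic_zero (r : ℝ) : todaHeteroclinic r 0 = (r, 0) := by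
  simp [todaHeteroclinic]

theorem tendsto_todaHeteroclinic_atBot {r : ℝ} (hr : 0 < r) :
    Tendsto (todaHeteroclinic r) atBot (𝓝 (0, -r)) := by
  have hu : Tendsto (fun s => 2 * r * s) atBot atBot := tendsto_id.const_mul_atBot (by positivity)
  have hx := (tendsto_cosh_atBot.inv_tendsto_atTop.comp hu).const_mul r
  have hy := (tendsto_tanh_atBot.comp hu).const_mul r
  rw [mul_zero] at hx
  rw [mul_neg_one] at hy
  exact hx.prodMk_nhds hy

/-- Lyapunov instability of the equilibrium `(0, b)`, `b < 0`, of the planar ODE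
`ẋ = −2xy, ẏ = 2x²` (Poisson formulation of the two-dimensional Toda lattice). -/
theorem stmt_8 (b : ℝ) (hb : b < 0) :
    ∃ ε > 0, ∀ δ > 0, ∃ γ : ℝ → ℝ × ℝ,
      (∀ t ∈ Set.Ici (0 : ℝ), HasDerivWithinAt γ
        (-2 * (γ t).1 * (γ t).2, 2 * (γ t).1 ^ 2) (Set.Ici 0) t) ∧
      ‖γ 0 - ((0 : ℝ), b)‖ < δ ∧ ∃ t ≥ (0 : ℝ), ε ≤ ‖γ t - ((0 : ℝ), b)‖ := by
  have hr : 0 < -b := neg_pos.mpr hb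
  refine ⟨-b, hr, fun δ hδ => ?_⟩
  have hlim := tendsto_todaHeteroclinic_atBot hr
  rw [neg_neg] at hlim
  obtain ⟨T, hT, hT0⟩ := ((Metric.tendsto_nhds.mp hlim δ hδ).and (eventually_le_atBot 0)).exists
  refine ⟨fun t => todaHeteroclinic (-b) (t + T), fun t _ => ?_, ?_, -T, by linarith, ?_⟩
  · exact ((hasDerivAt_todaHeteroclinic (-b) (t + T)).comp_add_const t T).hasDerivWithinAt
  · simpa [dist_eq_norm] using hT
  · simp [todaHeteroclinic_zero, Prod.norm_def, abs_of_neg hb]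
end

section
/- Consider the planar ODE ẋ = −x p, ṗ = x²p/(1 + x²) (the S¹-reduced light Chaplygin sleigh on a cylinder). For every p₀ > 0, the equilibrium (0, p₀) is Lyapunov stable: for every ε > 0 there exists δ > 0 such that every differentiable curve γ : [0,∞) → ℝ² satisfying γ'(t) = (−γ₁(t)γ₂(t), γ₁(t)²γ₂(t)/(1+γ₁(t)²)) for all t ≥ 0 and ‖γ(0) − (0,p₀)‖ < δ satisfies ‖γ(t) − (0,p₀)‖ < ε for all t ≥ 0. -/
/-!
Along a trajectory, `ṗ = x²p/(1+x²)` has the sign of `p`, so a trajectory starting with `p > 0`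
keeps `p` positive and nondecreasing; then `(x²)˙ = -2x²p ≤ 0`, so `|x|` never grows. The first
integral `p + ½ log(1 + x²)` bounds the growth of `p` by `½ log(1 + x(0)²) ≤ x(0)²/2`.
-/

open Set Real

theorem monotoneOn_of_hasDerivWithinAt_nonneg_of_subset {D s : Set ℝ} {f f' : ℝ → ℝ}
    (hD : Convex ℝ D) (hDs : D ⊆ s) (hf : ∀ t ∈ D, HasDerivWithinAt f (f' t) s t)
    (hf' : ∀ t ∈ interior D, 0 ≤ f' t) : MonotoneOn f D :=
  monotoneOn_of_hasDerivWithinAt_nonneg hD (fun t ht ↦ (hf t ht).continuousWithinAt.mono hDs)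
    (fun t ht ↦ (hf t (interior_subset ht)).mono (interior_subset.trans hDs)) hf'

theorem antitoneOn_of_hasDerivWithinAt_nonpos_of_subset {D s : Set ℝ} {f f' : ℝ → ℝ}
    (hD : Convex ℝ D) (hDs : D ⊆ s) (hf : ∀ t ∈ D, HasDerivWithinAt f (f' t) s t)
    (hf' : ∀ t ∈ interior D, f' t ≤ 0) : AntitoneOn f D :=
  antitoneOn_of_hasDerivWithinAt_nonpos hD (fun t ht ↦ (hf t ht).continuousWithinAt.mono hDs)
    (fun t ht ↦ (hf t (interior_subset ht)).mono (interior_subset.trans hDs)) hf'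

theorem monotoneOn_Ici_of_hasDerivWithinAt_nonneg_of_pos {f f' : ℝ → ℝ} {a : ℝ}
    (hf : ∀ t ∈ Ici a, HasDerivWithinAt f (f' t) (Ici a) t)
    (hf' : ∀ t ∈ Ioi a, 0 < f t → 0 ≤ f' t) (ha : 0 < f a) : MonotoneOn f (Ici a) := by
  suffices hpos : ∀ t ∈ Ioi a, 0 < f t by
    refine monotoneOn_of_hasDerivWithinAt_nonneg_of_subset (convex_Ici a) subset_rfl hf ?_
    rw [interior_Ici]
    exact fun t ht ↦ hf' t ht (hpos t ht)
  by_contra! hneg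
  obtain ⟨t₀, ht₀, hft₀⟩ := hneg
  -- `T` is the first time at which `f` vanishes; `f` is monotone before it, hence `f T ≥ f a > 0`.
  set S := Ici a ∩ f ⁻¹' Iic 0
  have hS : IsClosed S := ContinuousOn.preimage_isClosed_of_isClosed
    (fun t ht ↦ (hf t ht).continuousWithinAt) isClosed_Ici isClosed_Iic
  have hSbdd : BddBelow S := ⟨a, fun _ h ↦ h.1⟩
  set T := sInf S
  obtain ⟨haT, hfT⟩ : T ∈ S := hS.csInf_mem ⟨t₀, Ioi_subset_Ici_self ht₀, hft₀⟩ hSbdd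
  have hbefore : ∀ t ∈ Ico a T, 0 < f t := fun t ht ↦
    not_le.1 fun h ↦ (csInf_le hSbdd ⟨ht.1, h⟩).not_gt ht.2
  have hmono : MonotoneOn f (Icc a T) := by
    refine monotoneOn_of_hasDerivWithinAt_nonneg_of_subset (convex_Icc a T) Icc_subset_Ici_self
      (fun t ht ↦ hf t ht.1) ?_
    rw [interior_Icc]
    exact fun t ht ↦ hf' t ht.1 (hbefore t (Ioo_subset_Ico_self ht))
  exact (ha.trans_le (hmono (left_mem_Icc.2 haT) (right_mem_Icc.2 haT) haT)).not_ge hfT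

def IsSleighTrajectory (γ : ℝ → ℝ × ℝ) : Prop :=
  ∀ t ∈ Ici (0 : ℝ), HasDerivWithinAt γ
    (-(γ t).1 * (γ t).2, (γ t).1 ^ 2 * (γ t).2 / (1 + (γ t).1 ^ 2)) (Ici 0) t

namespace IsSleighTrajectory

variable {γ : ℝ → ℝ × ℝ}

theorem hasDerivWithinAt_sq_fst (hγ : IsSleighTrajectory γ) {t : ℝ} (ht : t ∈ Ici 0) :
    HasDerivWithinAt (fun s ↦ (γ s).1 ^ 2) (-2 * (γ t).1 ^ 2 * (γ t).2) (Ici 0) t := by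
  refine (((ContinuousLinearMap.fst ℝ ℝ ℝ).hasFDerivAt.comp_hasDerivWithinAt t
    (hγ t ht)).fun_pow 2).congr_deriv ?_
  simp only [ContinuousLinearMap.coe_fst', Function.comp_apply]
  ring

theorem hasDerivWithinAt_snd (hγ : IsSleighTrajectory γ) {t : ℝ} (ht : t ∈ Ici 0) :
    HasDerivWithinAt (fun s ↦ (γ s).2) ((γ t).1 ^ 2 * (γ t).2 / (1 + (γ t).1 ^ 2)) (Ici 0) t :=
  (ContinuousLinearMap.snd ℝ ℝ ℝ).hasFDerivAt.comp_hasDerivWithinAt t (hγ t ht)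

theorem snd_add_log_eq (hγ : IsSleighTrajectory γ) {t : ℝ} (ht : 0 ≤ t) :
    (γ t).2 + log (1 + (γ t).1 ^ 2) / 2 = (γ 0).2 + log (1 + (γ 0).1 ^ 2) / 2 := by
  have hderiv : ∀ s ∈ Ici (0 : ℝ),
      HasDerivWithinAt (fun s ↦ (γ s).2 + log (1 + (γ s).1 ^ 2) / 2) 0 (Ici 0) s := by
    intro s hs
    have hpos : 1 + (γ s).1 ^ 2 ≠ 0 := by positivity
    refine ((hasDerivWithinAt_snd hγ hs).fun_add
      ((((hasDerivWithinAt_sq_fst hγ hs).const_add 1).log hpos).div_const 2)).congr_deriv ?_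
    field_simp
    ring
  exact constant_of_has_deriv_right_zero (fun s hs ↦ (hderiv s hs.1).continuousWithinAt.mono
    Icc_subset_Ici_self) (fun s hs ↦ (hderiv s hs.1).mono (Ici_subset_Ici.2 hs.1)) t ⟨ht, le_rfl⟩

theorem snd_le (hγ : IsSleighTrajectory γ) {t : ℝ} (ht : 0 ≤ t) :
    (γ t).2 ≤ (γ 0).2 + (γ 0).1 ^ 2 / 2 := by
  have hlog_t : 0 ≤ log (1 + (γ t).1 ^ 2) := log_nonneg (by nlinarith)
  have hlog_0 : log (1 + (γ 0).1 ^ 2) ≤ (γ 0).1 ^ 2 := by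
    linarith [log_le_sub_one_of_pos (by positivity : (0 : ℝ) < 1 + (γ 0).1 ^ 2)]
  linarith [hγ.snd_add_log_eq ht]

theorem snd_monotoneOn (hγ : IsSleighTrajectory γ) (h0 : 0 < (γ 0).2) :
    MonotoneOn (fun t ↦ (γ t).2) (Ici 0) :=
  monotoneOn_Ici_of_hasDerivWithinAt_nonneg_of_pos (fun _ ht ↦ hγ.hasDerivWithinAt_snd ht)
    (fun _ _ hp ↦ by positivity) h0

theorem sq_fst_antitoneOn (hγ : IsSleighTrajectory γ) (h0 : 0 < (γ 0).2) :
    AntitoneOn (fun t ↦ (γ t).1 ^ 2) (Ici 0) := by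
  refine antitoneOn_of_hasDerivWithinAt_nonpos_of_subset (convex_Ici 0) subset_rfl
    (fun _ ht ↦ hγ.hasDerivWithinAt_sq_fst ht) fun t ht ↦ ?_
  have hp : (γ 0).2 ≤ (γ t).2 :=
    hγ.snd_monotoneOn h0 self_mem_Ici (interior_subset ht) (interior_subset ht)
  have := sq_nonneg (γ t).1
  nlinarith

end IsSleighTrajectory

/-- Lyapunov stability of the equilibrium `(0, p₀)`, `p₀ > 0`, of the planar ODE
`ẋ = −xp, ṗ = x²p/(1+x²)` (the S¹-reduced light Chaplygin sleigh on a cylinder). -/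
theorem stmt_9 (p₀ : ℝ) (hp₀ : 0 < p₀) :
    ∀ ε > 0, ∃ δ > 0, ∀ γ : ℝ → ℝ × ℝ,
      (∀ t ∈ Set.Ici (0 : ℝ), HasDerivWithinAt γ
        (-(γ t).1 * (γ t).2, (γ t).1 ^ 2 * (γ t).2 / (1 + (γ t).1 ^ 2)) (Set.Ici 0) t) →
      ‖γ 0 - ((0 : ℝ), p₀)‖ < δ → ∀ t ≥ (0 : ℝ), ‖γ t - ((0 : ℝ), p₀)‖ < ε := by
  intro ε hε
  set δ := min p₀ (min 1 (ε / 2))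
  have hδp : δ ≤ p₀ := min_le_left _ _
  have hδ1 : δ ≤ 1 := (min_le_right _ _).trans (min_le_left _ _)
  have hδε : δ ≤ ε / 2 := (min_le_right _ _).trans (min_le_right _ _)
  refine ⟨δ, by positivity, fun γ hγ hγ0 t ht ↦ ?_⟩
  replace hγ : IsSleighTrajectory γ := hγ
  have hx0 : |(γ 0).1| < δ := by simpa using (norm_fst_le _).trans_lt hγ0
  have hp0 : |(γ 0).2 - p₀| < δ := by simpa using (norm_snd_le _).trans_lt hγ0
  obtain ⟨hp0_lo, hp0_hi⟩ := abs_lt.1 hp0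
  have hp0_pos : 0 < (γ 0).2 := by linarith
  have hxt : |(γ t).1| ≤ |(γ 0).1| :=
    sq_le_sq.1 (hγ.sq_fst_antitoneOn hp0_pos self_mem_Ici (mem_Ici.2 ht) ht)
  have hpt_lo : (γ 0).2 ≤ (γ t).2 := hγ.snd_monotoneOn hp0_pos self_mem_Ici (mem_Ici.2 ht) ht
  have hpt_hi := hγ.snd_le ht
  have hx0sq : (γ 0).1 ^ 2 ≤ δ := by nlinarith [sq_abs (γ 0).1, abs_nonneg (γ 0).1]
  rw [Prod.norm_def, Prod.fst_sub, Prod.snd_sub, norm_eq_abs, norm_eq_abs, sub_zero]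
  exact max_lt (by linarith) (abs_lt.2 ⟨by linarith, by linarith⟩)
end

section
/- Consider the ODE on ℝ³ given by ẋ = −x p, θ̇ = p, ṗ = x²p²/(1 + x²) (the light Chaplygin sleigh on a cylinder, with θ the angle coordinate unrolled to ℝ). For every θ₀ ∈ ℝ, the equilibrium (0, θ₀, 0) is Lyapunov unstable: there exists ε > 0 such that for every δ > 0 there is a differentiable curve γ : [0,∞) → ℝ³ solving the ODE with ‖γ(0) − (0,θ₀,0)‖ < δ and ‖γ(t) − (0,θ₀,0)‖ ≥ ε for some t ≥ 0. -/
/-! The plane `x = 0` is invariant and on it the system reduces to the free particle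
`θ̇ = p, ṗ = 0`. Its trajectories `θ = θ₀ + c t, p = c` start `|c|`-close to the equilibrium
but drift a distance `1` away by time `1 / c`, however small `c > 0` is. -/

namespace ChaplyginSleigh

noncomputable def field (z : ℝ × ℝ × ℝ) : ℝ × ℝ × ℝ :=
  (-z.1 * z.2.2, z.2.2, z.1 ^ 2 * z.2.2 ^ 2 / (1 + z.1 ^ 2))

lemma field_zero_fst (θ p : ℝ) : field (0, θ, p) = (0, p, 0) := by
  simp [field]

def freeParticle (θ₀ c : ℝ) (t : ℝ) : ℝ × ℝ × ℝ := (0, θ₀ + c * t, c)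

lemma hasDerivAt_freeParticle (θ₀ c t : ℝ) :
    HasDerivAt (freeParticle θ₀ c) (field (freeParticle θ₀ c t)) t := by
  rw [freeParticle, field_zero_fst]
  have hθ : HasDerivAt (fun t => θ₀ + c * t) c t := by
    simpa using ((hasDerivAt_id t).const_mul c).const_add θ₀
  exact (hasDerivAt_const t 0).prodMk (hθ.prodMk (hasDerivAt_const t c))

lemma norm_freeParticle_sub (θ₀ c t : ℝ) :
    ‖freeParticle θ₀ c t - (0, θ₀, 0)‖ = max |c * t| |c| := by
  simp [freeParticle, Prod.norm_def]

end ChaplyginSleigh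

open ChaplyginSleigh in
/-- Lyapunov instability of the equilibria `(0, θ₀, 0)` of the ODE on `ℝ³`
`ẋ = −xp, θ̇ = p, ṗ = x²p²/(1+x²)` (the light Chaplygin sleigh on a cylinder,
with the angle coordinate `θ` unrolled to `ℝ`; coordinates ordered `(x, θ, p)`). -/
theorem stmt_10 (θ₀ : ℝ) :
    ∃ ε > 0, ∀ δ > 0, ∃ γ : ℝ → ℝ × ℝ × ℝ,
      (∀ t ∈ Set.Ici (0 : ℝ), HasDerivWithinAt γ
        (-(γ t).1 * (γ t).2.2, (γ t).2.2,
          (γ t).1 ^ 2 * (γ t).2.2 ^ 2 / (1 + (γ t).1 ^ 2)) (Set.Ici 0) t) ∧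
      ‖γ 0 - ((0 : ℝ), θ₀, (0 : ℝ))‖ < δ ∧
      ∃ t ≥ (0 : ℝ), ε ≤ ‖γ t - ((0 : ℝ), θ₀, (0 : ℝ))‖ := by
  refine ⟨1, one_pos, fun δ hδ => ?_⟩
  have hc : 0 < δ / 2 := half_pos hδ
  refine ⟨freeParticle θ₀ (δ / 2), fun t _ => (hasDerivAt_freeParticle _ _ t).hasDerivWithinAt,
    ?_, 1 / (δ / 2), by positivity, ?_⟩
  · rw [norm_freeParticle_sub, mul_zero, abs_zero, abs_of_pos hc, max_eq_right hc.le]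
    exact half_lt_self hδ
  · rw [norm_freeParticle_sub, mul_one_div_cancel hc.ne', abs_one]
    exact le_max_left _ _
end

section
/- Let P be a locally compact Hausdorff topological space (e.g. a finite-dimensional manifold), φ : ℝ × P → P a continuous flow (φ(0,·) = id and φ(t+s,·) = φ(t,φ(s,·))), and z_e ∈ P a fixed point of the flow: φ(t, z_e) = z_e for all t. Suppose there is an open neighborhood U of z_e and continuous functions C₀, …, C_k : U → ℝ that are conserved by the flow, in the sense that C_i(φ(t,z)) = C_i(z) whenever z ∈ U, t ≥ 0, and φ(s,z) ∈ U for all s ∈ [0,t]; and suppose ⋂_{i=0}^{k} C_i^{-1}({C_i(z_e)}) = {z_e}. Then z_e is Lyapunov stable: for every neighborhood W of z_e there is a neighborhood V of z_e such that φ(t,z) ∈ W for every z ∈ V and every t ≥ 0. -/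
/-- Basic lemma of the continuous energy-Casimir method: if a continuous flow on a locally
compact Hausdorff space has a fixed point `ze`, and there are continuous conserved quantities
`C₀, …, C_k` defined on a neighborhood `U` of `ze` whose joint level set through `ze` is
`{ze}`, then `ze` is Lyapunov stable. -/
theorem stmt_12 (P : Type*) [TopologicalSpace P] [LocallyCompactSpace P] [T2Space P]
    (φ : ℝ → P → P) (hcont : Continuous fun p : ℝ × P => φ p.1 p.2)
    (hφ0 : ∀ z, φ 0 z = z) (hφadd : ∀ t s z, φ (t + s) z = φ t (φ s z))
    (ze : P) (hze : ∀ t, φ t ze = ze)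
    (k : ℕ) (U : Set P) (hU : IsOpen U) (hzeU : ze ∈ U)
    (C : Fin (k + 1) → P → ℝ) (hCc : ∀ i, ContinuousOn (C i) U)
    (hCcons : ∀ i z t, z ∈ U → 0 ≤ t → (∀ s ∈ Set.Icc 0 t, φ s z ∈ U) →
      C i (φ t z) = C i z)
    (hlevel : {z ∈ U | ∀ i, C i z = C i ze} = {ze}) :
    ∀ W ∈ nhds ze, ∃ V ∈ nhds ze, ∀ z ∈ V, ∀ t ≥ (0 : ℝ), φ t z ∈ W := by
  intro W hW
  -- compact neighborhood K ⊆ U ∩ W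
  obtain ⟨K, hKnhds, hKsub, hKcomp⟩ :=
    local_compact_nhds (x := ze) (n := U ∩ W) (Filter.inter_mem (hU.mem_nhds hzeU) hW)
  have hKU : K ⊆ U := fun x hx => (hKsub hx).1
  have hKW : K ⊆ W := fun x hx => (hKsub hx).2
  have hKclosed : IsClosed K := hKcomp.isClosed
  -- the Lyapunov function
  set L : P → ℝ := fun z => ∑ i, (C i z - C i ze) ^ 2 with hLdef
  have hLcont : ContinuousOn L U := by
    apply continuousOn_finset_sum
    intro i _
    exact ((hCc i).sub continuousOn_const).pow 2
  have hLnonneg : ∀ z, 0 ≤ L z := fun z =>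
    Finset.sum_nonneg fun i _ => sq_nonneg _
  have hLze : L ze = 0 := by
    simp [hLdef]
  have hLzero : ∀ z ∈ U, L z = 0 → z = ze := by
    intro z hzU hz
    have h0 : ∀ i ∈ Finset.univ, (C i z - C i ze) ^ 2 = 0 := by
      rw [Finset.sum_eq_zero_iff_of_nonneg (fun i _ => sq_nonneg _)] at hz
      exact hz
    have : z ∈ ({z ∈ U | ∀ i, C i z = C i ze} : Set P) := by
      refine ⟨hzU, fun i => ?_⟩
      have := h0 i (Finset.mem_univ i)
      have := pow_eq_zero_iff (n := 2) (by norm_num) |>.mp this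
      linarith [sub_eq_zero.mp this]
    rw [hlevel] at this
    exact this
  -- frontier set
  set F : Set P := K \ interior K with hFdef
  have hFcomp : IsCompact F := hKcomp.diff isOpen_interior
  have hzeInt : ze ∈ interior K := mem_interior_iff_mem_nhds.mpr hKnhds
  have hFpos : ∀ y ∈ F, 0 < L y := by
    intro y hy
    rcases (hLnonneg y).lt_or_eq with h | h
    · exact h
    · exfalso
      have : y = ze := hLzero y (hKU hy.1) h.symm
      exact hy.2 (this ▸ hzeInt)
  -- positive lower bound m on F
  obtain ⟨m, hmpos, hmF⟩ : ∃ m > 0, ∀ y ∈ F, m ≤ L y := by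
    rcases F.eq_empty_or_nonempty with hFe | hFne
    · exact ⟨1, one_pos, by simp [hFe]⟩
    · obtain ⟨y0, hy0, hy0min⟩ :=
        hFcomp.exists_isMinOn hFne (hLcont.mono (fun x hx => hKU hx.1))
      exact ⟨L y0, hFpos y0 hy0, fun y hy => hy0min hy⟩
  -- the neighborhood V
  set V : Set P := interior K ∩ {z ∈ U | L z < m} with hVdef
  have hVopen : IsOpen V :=
    isOpen_interior.inter (hLcont.isOpen_inter_preimage hU isOpen_Iio)
  have hzeV : ze ∈ V := ⟨hzeInt, hzeU, by rw [hLze]; exact hmpos⟩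
  refine ⟨V, hVopen.mem_nhds hzeV, ?_⟩
  intro z hzV t ht
  -- show the orbit never leaves interior K
  suffices h : φ t z ∈ interior K from hKW (interior_subset h)
  by_contra hout
  have hf : Continuous fun s : ℝ => φ s z :=
    hcont.comp (continuous_id.prodMk continuous_const)
  set S : Set ℝ := {s | 0 ≤ s ∧ φ s z ∉ interior K} with hSdef
  have hSne : S.Nonempty := ⟨t, ht, hout⟩
  have hSbdd : BddBelow S := ⟨0, fun s hs => hs.1⟩
  set t₀ : ℝ := sInf S with ht₀def
  have ht₀0 : 0 ≤ t₀ := le_csInf hSne fun s hs => hs.1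
  have hbefore : ∀ s, 0 ≤ s → s < t₀ → φ s z ∈ interior K := by
    intro s hs hst
    by_contra hc
    exact absurd (csInf_le hSbdd ⟨hs, hc⟩) (not_le.mpr hst)
  have ht₀out : φ t₀ z ∉ interior K := by
    intro hin
    have hmem : (fun s : ℝ => φ s z) ⁻¹' interior K ∈ nhds t₀ :=
      hf.continuousAt.preimage_mem_nhds (isOpen_interior.mem_nhds hin)
    obtain ⟨ε, hε, hball⟩ := Metric.mem_nhds_iff.mp hmem
    have : t₀ + ε / 2 ≤ t₀ := by
      apply le_csInf hSne
      intro s hs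
      by_contra hc
      push_neg at hc
      have hst₀ : t₀ ≤ s := csInf_le hSbdd hs
      have : dist s t₀ < ε := by
        rw [Real.dist_eq, abs_of_nonneg (by linarith)]
        linarith
      exact hs.2 (hball this)
    linarith
  have ht₀pos : 0 < t₀ := by
    rcases ht₀0.lt_or_eq with h | h
    · exact h
    · exfalso; apply ht₀out; rw [← h, hφ0]; exact hzV.1
  -- φ t₀ z ∈ K
  have ht₀K : φ t₀ z ∈ K := by
    have hcl : t₀ ∈ closure (Set.Ico (0:ℝ) t₀) := by
      rw [closure_Ico ht₀pos.ne]
      exact ⟨ht₀0, le_refl _⟩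
    have := (hf.continuousWithinAt (s := Set.Ico 0 t₀) (x := t₀)).mem_closure_image hcl
    have himg : (fun s : ℝ => φ s z) '' Set.Ico 0 t₀ ⊆ K := by
      rintro _ ⟨s, ⟨hs0, hst⟩, rfl⟩
      exact interior_subset (hbefore s hs0 hst)
    exact hKclosed.closure_subset ((closure_mono himg).trans (by rw [hKclosed.closure_eq]) this)
  have ht₀F : φ t₀ z ∈ F := ⟨ht₀K, ht₀out⟩
  -- conservation along [0, t₀]
  have hzU : z ∈ U := hzV.2.1
  have horbU : ∀ s ∈ Set.Icc (0:ℝ) t₀, φ s z ∈ U := by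
    rintro s ⟨hs0, hst⟩
    rcases hst.lt_or_eq with h | h
    · exact hKU (interior_subset (hbefore s hs0 h))
    · rw [h]; exact hKU ht₀K
  have hLcons : L (φ t₀ z) = L z := by
    simp only [hLdef]
    apply Finset.sum_congr rfl
    intro i _
    rw [hCcons i z t₀ hzU ht₀0 horbU]
  have := hmF _ ht₀F
  have := hzV.2.2
  linarith [hLcons ▸ hmF _ ht₀F]
end

section
/- Let (X, τ) be a topological space. For x ∈ X define T₂(x) := { y ∈ X : U ∩ V ≠ ∅ for every open neighborhood U of x and every open neighborhood V of y }, and for A ⊆ X define T₂(A) := ⋃_{x ∈ A} T₂(x). Assume X is T₂-idempotent: T₂(T₂(x)) = T₂(x) for every x ∈ X. Then: (i) the relation x ~ y ⟺ y ∈ T₂(x) is an equivalence relation on X; and (ii) for all x, y ∈ X the following are equivalent: (1) y ∉ T₂(x); (2) T₂(x) ≠ T₂(y); (3) T₂(x) ∩ T₂(y) = ∅; (4) there exist open neighborhoods U_x of x and U_y of y such that T₂(U_x) ∩ T₂(U_y) = ∅. -/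
/-- `T2pt x` is the set of points `y` that cannot be separated from `x` by
open neighborhoods. -/
def T2pt {X : Type*} [TopologicalSpace X] (x : X) : Set X :=
  {y | ∀ U V : Set X, IsOpen U → IsOpen V → x ∈ U → y ∈ V → (U ∩ V).Nonempty}

/-- `T2set A = ⋃_{x ∈ A} T2pt x`. -/
def T2set {X : Type*} [TopologicalSpace X] (A : Set X) : Set X :=
  ⋃ x ∈ A, T2pt x

lemma T2pt_refl {X : Type*} [TopologicalSpace X] (x : X) : x ∈ T2pt x :=
  fun U _ _ _ hx hx' => ⟨x, hx, hx'⟩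

lemma T2pt_symm {X : Type*} [TopologicalSpace X] {x y : X} (h : y ∈ T2pt x) : x ∈ T2pt y := by
  intro U V hU hV hy hx
  obtain ⟨z, hz1, hz2⟩ := h V U hV hU hx hy
  exact ⟨z, hz2, hz1⟩

lemma mem_T2set {X : Type*} [TopologicalSpace X] {A : Set X} {z : X} :
    z ∈ T2set A ↔ ∃ x ∈ A, z ∈ T2pt x := by
  simp [T2set]

/-- If a topological space `X` is `T₂`-idempotent, then (i) `y ∈ T₂(x)` is an equivalence
relation, and (ii) the conditions `y ∉ T₂(x)`, `T₂(x) ≠ T₂(y)`, `T₂(x) ∩ T₂(y) = ∅`, and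
the existence of open neighborhoods `U_x, U_y` with `T₂(U_x) ∩ T₂(U_y) = ∅` are all
equivalent. -/
theorem stmt_13 (X : Type*) [TopologicalSpace X]
    (hidem : ∀ x : X, T2set (T2pt x) = T2pt x) :
    Equivalence (fun x y : X => y ∈ T2pt x) ∧
    ∀ x y : X,
      (y ∉ T2pt x ↔ T2pt x ≠ T2pt y) ∧
      (y ∉ T2pt x ↔ T2pt x ∩ T2pt y = ∅) ∧
      (y ∉ T2pt x ↔ ∃ Ux Uy : Set X, IsOpen Ux ∧ IsOpen Uy ∧ x ∈ Ux ∧ y ∈ Uy ∧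
        T2set Ux ∩ T2set Uy = ∅) := by
  have trans : ∀ {x y z : X}, y ∈ T2pt x → z ∈ T2pt y → z ∈ T2pt x := by
    intro x y z hxy hyz
    rw [← hidem x]
    exact mem_T2set.2 ⟨y, hxy, hyz⟩
  have heq : ∀ {x y : X}, y ∈ T2pt x → T2pt x = T2pt y := by
    intro x y h
    ext z
    exact ⟨fun hz => trans (T2pt_symm h) hz, fun hz => trans h hz⟩
  refine ⟨⟨T2pt_refl, fun h => T2pt_symm h, fun h h' => trans h h'⟩, fun x y => ?_⟩
  refine ⟨⟨fun h he => h (he ▸ T2pt_refl y), fun h hy => h (heq hy)⟩,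
    ⟨fun h => ?_, fun h hy => ?_⟩, ⟨fun h => ?_, ?_⟩⟩
  · ext z
    simp only [Set.mem_inter_iff, Set.mem_empty_iff_false, iff_false, not_and]
    intro hzx hzy
    exact h (trans hzx (T2pt_symm hzy))
  · have : y ∈ (∅ : Set X) := h ▸ ⟨hy, T2pt_refl y⟩
    exact this
  · have hsep : ∃ U V : Set X, IsOpen U ∧ IsOpen V ∧ x ∈ U ∧ y ∈ V ∧ U ∩ V = ∅ := by
      by_contra hc
      push_neg at hc
      exact h fun U V hU hV hx hy => (hc U V hU hV hx hy)
    obtain ⟨U, V, hU, hV, hx, hy, hUV⟩ := hsep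
    refine ⟨U, V, hU, hV, hx, hy, ?_⟩
    ext z
    simp only [Set.mem_inter_iff, Set.mem_empty_iff_false, iff_false, not_and]
    intro hzU hzV
    obtain ⟨u, hu, hzu⟩ := mem_T2set.1 hzU
    obtain ⟨v, hv, hzv⟩ := mem_T2set.1 hzV
    have : v ∈ T2pt u := trans hzu (T2pt_symm hzv)
    obtain ⟨w, hw1, hw2⟩ := this U V hU hV hu hv
    exact (Set.eq_empty_iff_forall_notMem.1 hUV w) ⟨hw1, hw2⟩
  · rintro ⟨U, V, hU, hV, hx, hy, hUV⟩ hy'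
    have h1 : y ∈ T2set U := mem_T2set.2 ⟨x, hx, hy'⟩
    have h2 : y ∈ T2set V := mem_T2set.2 ⟨y, hy, T2pt_refl y⟩
    exact (Set.eq_empty_iff_forall_notMem.1 hUV y) ⟨h1, h2⟩
end

section
/- Let P be a second countable topological space and ~ an equivalence relation on P whose quotient projection π : P → P/~ (quotient topology) is an open map. Suppose there is an open dense subset Reg ⊆ P that is a union of ~-classes (the 'regular points', as for the regular leaves of a smooth integrable generalized distribution), and a family of continuous functions C_i : P → ℝ, i ∈ I, each constant on the ~-classes, such that: (a) the map C : P → ℝ^I, C(z) = (C_i(z))_{i∈I}, is open onto its image when ℝ^I carries the product topology; and (b) C separates the classes contained in Reg, i.e. for z, z' ∈ Reg, C(z) = C(z') implies z ~ z'. Then for every z ∈ P: T̄₂(z) = ⋂_{i ∈ I} C_i^{-1}({C_i(z)}), where T̄₂(z) := π^{-1}(T₂(π(z))) and T₂(q) := { q' ∈ P/~ : every open neighborhood of q meets every open neighborhood of q' }. -/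
/-- The saturated `T̄₂`-set of a point `z` of a space partitioned by an equivalence
relation `s`: the preimage under the quotient projection of the `T₂`-set of the class
of `z` in the quotient (leaf) space. -/
def TbarPt {P : Type*} [TopologicalSpace P] (s : Setoid P) (z : P) : Set P :=
  Quotient.mk s ⁻¹' T2pt (Quotient.mk s z)

/-- Let `P` be second countable, partitioned by an equivalence relation `s` with open
quotient projection, and let `Reg ⊆ P` be an open dense saturated set of 'regular points'.
If a family of continuous first integrals `C_i` of `s` is such that `C = (C_i)_i` is open
onto its image (product topology on `ℝ^I`) and separates the classes contained in `Reg`,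
then `T̄₂(z) = ⋂ i, C_i⁻¹(C_i(z))` for every `z ∈ P`. -/
theorem stmt_17 (P : Type*) [TopologicalSpace P] [SecondCountableTopology P]
    (s : Setoid P) (hopen : IsOpenMap (Quotient.mk s))
    (Reg : Set P) (hRegOpen : IsOpen Reg) (hRegDense : Dense Reg)
    (hRegSat : ∀ x y : P, s.r x y → x ∈ Reg → y ∈ Reg)
    (I : Type*) (C : I → P → ℝ)
    (hCc : ∀ i, Continuous (C i))
    (hCi : ∀ i (x y : P), s.r x y → C i x = C i y)
    (hCopen : ∀ U : Set P, IsOpen U → ∃ V : Set (I → ℝ), IsOpen V ∧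
      (fun z i => C i z) '' U = V ∩ Set.range (fun z i => C i z))
    (hCsep : ∀ z z' : P, z ∈ Reg → z' ∈ Reg → (∀ i, C i z = C i z') → s.r z z') :
    ∀ z : P, TbarPt s z = ⋂ i, C i ⁻¹' {C i z} := by
  intro z
  set Cm : P → (I → ℝ) := fun z i => C i z with hCm
  have hCmc : Continuous Cm := continuous_pi hCc
  ext z'
  simp only [Set.mem_iInter, Set.mem_preimage, Set.mem_singleton_iff]
  constructor
  · -- ⊆ : if z' inseparable from z in the quotient, then C i z' = C i z for all i
    intro hz' i
    by_contra hne
    obtain ⟨A, B, hA, hB, hzA, hz'B, hAB⟩ := t2_separation (Ne.symm hne)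
    have key : ∀ (O : Set ℝ), Quotient.mk s ⁻¹' (Quotient.mk s '' (C i ⁻¹' O)) = C i ⁻¹' O := by
      intro O
      ext w
      simp only [Set.mem_preimage, Set.mem_image]
      constructor
      · rintro ⟨u, hu, hq⟩
        rwa [← hCi i u w (Quotient.exact hq)]
      · exact fun hw => ⟨w, hw, rfl⟩
    have hU : IsOpen (Quotient.mk s '' (C i ⁻¹' A)) := by
      rw [isOpen_coinduced (f := Quotient.mk s), key]
      exact hA.preimage (hCc i)
    have hV : IsOpen (Quotient.mk s '' (C i ⁻¹' B)) := by
      rw [isOpen_coinduced (f := Quotient.mk s), key]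
      exact hB.preimage (hCc i)
    obtain ⟨q, hq1, hq2⟩ := hz' _ _ hU hV ⟨z, hzA, rfl⟩ ⟨z', hz'B, rfl⟩
    obtain ⟨a, ha, hqa⟩ := hq1
    obtain ⟨b, hb, hqb⟩ := hq2
    have hab : C i a = C i b := hCi i a b (Quotient.exact (hqa.trans hqb.symm))
    exact hAB.ne_of_mem ha (hab ▸ hb) rfl
  · -- ⊇ : if C z' = C z then z' is in the saturated T₂-set of z
    intro hC
    intro U' V' hU' hV' hzU' hz'V'
    -- work with the open preimages in P
    set U : Set P := Quotient.mk s ⁻¹' U' with hUdef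
    set V : Set P := Quotient.mk s ⁻¹' V' with hVdef
    have hUo : IsOpen U := hU'.preimage continuous_quotient_mk'
    have hVo : IsOpen V := hV'.preimage continuous_quotient_mk'
    have hzU : z ∈ U := hzU'
    have hz'V : z' ∈ V := hz'V'
    have hCzz' : Cm z = Cm z' := funext fun i => (hC i).symm
    -- image of V ∩ Reg
    obtain ⟨W₂, hW₂, hW₂eq⟩ := hCopen (V ∩ Reg) (hVo.inter hRegOpen)
    -- image of U
    obtain ⟨W₁, hW₁, hW₁eq⟩ := hCopen U hUo
    have hCzW₁ : Cm z ∈ W₁ := (hW₁eq ▸ Set.mem_image_of_mem Cm hzU).1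
    -- Cm z' ∈ closure (W₂ ∩ range Cm)
    have hz'cl : z' ∈ closure (V ∩ Reg) :=
      hRegDense.open_subset_closure_inter hVo hz'V
    have hcl : Cm z ∈ closure (W₂ ∩ Set.range Cm) := by
      rw [hCzz', ← hW₂eq]
      exact image_closure_subset_closure_image hCmc (Set.mem_image_of_mem Cm hz'cl)
    -- W₁ is an open neighborhood of Cm z, hence meets W₂ ∩ range Cm
    obtain ⟨p, hpW₁, hpW₂, hpr⟩ := mem_closure_iff.mp hcl W₁ hW₁ hCzW₁
    -- p ∈ Cm '' U, so U ∩ Cm⁻¹(W₂) is nonempty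
    obtain ⟨u, huU, hup⟩ : p ∈ Cm '' U := hW₁eq ▸ ⟨hpW₁, hpr⟩
    have hne : (U ∩ Cm ⁻¹' W₂).Nonempty := ⟨u, huU, by rw [Set.mem_preimage, hup]; exact hpW₂⟩
    -- it meets Reg: get a regular point u'
    obtain ⟨u', ⟨hu'U, hu'W₂⟩, hu'Reg⟩ :=
      hRegDense.inter_open_nonempty _ (hUo.inter (hW₂.preimage hCmc)) hne
    -- Cm u' ∈ W₂ ∩ range Cm = Cm '' (V ∩ Reg)
    obtain ⟨v', ⟨hv'V, hv'Reg⟩, hv'eq⟩ : Cm u' ∈ Cm '' (V ∩ Reg) :=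
      hW₂eq ▸ ⟨hu'W₂, Set.mem_range_self u'⟩
    have hr : s.r u' v' := hCsep u' v' hu'Reg hv'Reg (fun i => congrFun hv'eq.symm i)
    exact ⟨Quotient.mk s u', hu'U, by rw [show (Quotient.mk s u' : Quotient s) = Quotient.mk s v' from Quotient.sound hr]; exact hv'V⟩
end

section
/- Let P be a second countable topological space and ~ an equivalence relation on P whose quotient projection π : P → P/~ (quotient topology) is an open map. Suppose there is an open dense subset Reg ⊆ P that is a union of ~-classes, and a family of continuous functions C_i : P → ℝ, i ∈ I, each constant on the ~-classes, such that the map C : P → ℝ^I, C(z) = (C_i(z))_{i∈I}, is open onto its image (ℝ^I with the product topology) and separates the classes contained in Reg (for z, z' ∈ Reg, C(z) = C(z') implies z ~ z'). Define T̄₂(z) := π^{-1}(T₂(π(z))) with T₂(q) := { q' ∈ P/~ : every open neighborhood of q meets every open neighborhood of q' }, and T̄₂(A) := ⋃_{z∈A} T̄₂(z). Then (P,~) is T̄₂-idempotent, i.e. T̄₂(T̄₂(z)) = T̄₂(z) for every z ∈ P, and the projection π_{T̄₂} : P → P/≈ onto the quotient by the equivalence relation z ≈ y ⟺ y ∈ T̄₂(z)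 is an open map. -/
lemma key {P : Type*} [TopologicalSpace P]
    (s : Setoid P)
    (Reg : Set P) (hRegOpen : IsOpen Reg) (hRegDense : Dense Reg)
    {I : Type*} (C : I → P → ℝ)
    (hCc : ∀ i, Continuous (C i))
    (hCi : ∀ i (x y : P), s.r x y → C i x = C i y)
    (hCopen : ∀ U : Set P, IsOpen U → ∃ V : Set (I → ℝ), IsOpen V ∧
      (fun z i => C i z) '' U = V ∩ Set.range (fun z i => C i z))
    (hCsep : ∀ z z' : P, z ∈ Reg → z' ∈ Reg → (∀ i, C i z = C i z') → s.r z z')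
    (z : P) : TbarPt s z = {y | ∀ i, C i y = C i z} := by
  have hCm : Continuous (fun z i => C i z : P → I → ℝ) := continuous_pi hCc
  ext y
  constructor
  · intro hy
    simp only [Set.mem_setOf_eq] at *
    by_contra hne
    push_neg at hne
    obtain ⟨i, hi⟩ := hne
    set f : Quotient s → ℝ := Quotient.lift (C i) (hCi i) with hf
    have hfc : Continuous f := continuous_coinduced_dom.mpr (hCc i)
    obtain ⟨U, V, hU, hV, hzU, hyV, hUV⟩ := t2_separation hi.symm
    obtain ⟨q, hq1, hq2⟩ :=
      hy (f ⁻¹' U) (f ⁻¹' V) (hU.preimage hfc) (hV.preimage hfc) hzU hyV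
    exact (Set.disjoint_left.mp hUV hq1) hq2
  · intro h U V hU hV hzU hyV
    set Cm : P → I → ℝ := fun z i => C i z with hCmdef
    set Ub : Set P := Quotient.mk s ⁻¹' U with hUbdef
    set Vb : Set P := Quotient.mk s ⁻¹' V with hVbdef
    have hmkc : Continuous (Quotient.mk s) := continuous_coinduced_rng
    have hUbo : IsOpen Ub := hU.preimage hmkc
    have hVbo : IsOpen Vb := hV.preimage hmkc
    have hzUb : z ∈ Ub := hzU
    have hyVb : y ∈ Vb := hyV
    have hCy : Cm y = Cm z := funext h
    obtain ⟨B, hBo, hB⟩ := hCopen Vb hVbo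
    have hCzB : Cm z ∈ B := by
      have h1 : Cm y ∈ B ∩ Set.range Cm := hB ▸ Set.mem_image_of_mem Cm hyVb
      rw [hCy] at h1; exact h1.1
    obtain ⟨u, huU, huReg⟩ := hRegDense.inter_open_nonempty (Ub ∩ Cm ⁻¹' B)
      (hUbo.inter (hBo.preimage hCm)) ⟨z, hzUb, hCzB⟩
    -- Cm u ∈ B ∩ range = Cm '' Vb
    have hCu : Cm u ∈ Cm '' Vb := by rw [hB]; exact ⟨huU.2, ⟨u, rfl⟩⟩
    obtain ⟨v₀, hv₀Vb, hv₀⟩ := hCu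
    obtain ⟨A, hAo, hA⟩ := hCopen (Ub ∩ Reg) (hUbo.inter hRegOpen)
    have hCuA : Cm u ∈ A := by
      have h1 : Cm u ∈ A ∩ Set.range Cm := hA ▸ Set.mem_image_of_mem Cm ⟨huU.1, huReg⟩
      exact h1.1
    obtain ⟨v, hvV, hvReg⟩ := hRegDense.inter_open_nonempty (Vb ∩ Cm ⁻¹' A)
      (hVbo.inter (hAo.preimage hCm)) ⟨v₀, hv₀Vb, show Cm v₀ ∈ A by rw [hv₀]; exact hCuA⟩
    have hCv : Cm v ∈ Cm '' (Ub ∩ Reg) := by rw [hA]; exact ⟨hvV.2, ⟨v, rfl⟩⟩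
    obtain ⟨u', hu'UR, hu'⟩ := hCv
    have hrel : s.r u' v := hCsep u' v hu'UR.2 hvReg (fun i => congrFun hu' i)
    exact ⟨Quotient.mk s u', hu'UR.1, by rw [Quotient.sound hrel]; exact hvV.1⟩

/-- Let `P` be second countable, partitioned by an equivalence relation `s` with open
quotient projection, with an open dense saturated set `Reg` of regular points, and a family
of continuous first integrals `C_i` of `s` such that `C = (C_i)_i` is open onto its image
and separates the classes contained in `Reg`. Then `(P, s)` is `T̄₂`-idempotent and the
projection onto the quotient by the relation `y ∈ T̄₂(z)` is an open map (equivalently, the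
`T̄₂`-saturation of every open set is open). -/
theorem stmt_18 (P : Type*) [TopologicalSpace P] [SecondCountableTopology P]
    (s : Setoid P) (hopen : IsOpenMap (Quotient.mk s))
    (Reg : Set P) (hRegOpen : IsOpen Reg) (hRegDense : Dense Reg)
    (hRegSat : ∀ x y : P, s.r x y → x ∈ Reg → y ∈ Reg)
    (I : Type*) (C : I → P → ℝ)
    (hCc : ∀ i, Continuous (C i))
    (hCi : ∀ i (x y : P), s.r x y → C i x = C i y)
    (hCopen : ∀ U : Set P, IsOpen U → ∃ V : Set (I → ℝ), IsOpen V ∧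
      (fun z i => C i z) '' U = V ∩ Set.range (fun z i => C i z))
    (hCsep : ∀ z z' : P, z ∈ Reg → z' ∈ Reg → (∀ i, C i z = C i z') → s.r z z') :
    (∀ z : P, (⋃ y ∈ TbarPt s z, TbarPt s y) = TbarPt s z) ∧
    (∀ U : Set P, IsOpen U → IsOpen (⋃ z ∈ U, TbarPt s z)) := by
  have K := key s Reg hRegOpen hRegDense C hCc hCi hCopen hCsep
  have hCm : Continuous (fun z i => C i z : P → I → ℝ) := continuous_pi hCc
  constructor
  · intro z
    ext w
    simp only [K, Set.mem_iUnion, Set.mem_setOf_eq]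
    constructor
    · rintro ⟨x, hx, hw⟩ i; rw [hw i, hx i]
    · intro hw; exact ⟨z, fun _ => rfl, hw⟩
  · intro U hUo
    obtain ⟨A, hAo, hA⟩ := hCopen U hUo
    have : (⋃ z ∈ U, TbarPt s z) = (fun z i => C i z) ⁻¹' A := by
      ext w
      simp only [K, Set.mem_iUnion, Set.mem_setOf_eq, Set.mem_preimage]
      constructor
      · rintro ⟨x, hxU, hw⟩
        have : (fun i => C i w) ∈ (fun z i => C i z) '' U := by
          have : (fun i => C i w) = (fun i => C i x) := funext hw
          rw [this]; exact Set.mem_image_of_mem _ hxU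
        rw [hA] at this; exact this.1
      · intro hw
        have : (fun i => C i w) ∈ (fun z i => C i z) '' U := by
          rw [hA]; exact ⟨hw, ⟨w, rfl⟩⟩
        obtain ⟨x, hxU, hx⟩ := this
        exact ⟨x, hxU, fun i => (congrFun hx i).symm⟩
    rw [this]
    exact hAo.preimage hCm
end
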